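/- arXiv:2003.10193 — 7 statements merged into one kernel-verified Lean document; each statement's English description precedes it below -/
import Mathlib

section
/- Let $(X_j)_{j\ge 1}$ be i.i.d. with $X_j = M_j H_j$ as above, $W_k=\prod_{j=1}^k X_j$. Then for $k<j$, $\mathrm{Cov}(W_j H_{j+1}, W_k H_{k+1}) = (r^k r_h - \mu_x^{2k}\mu_h^2)\,\mu_m\,\mu_h\,\mu_x^{j-k-1}$. -/
/-!
Index the independent family `M 0, M 1, …, H 0, H 1, …` by `ℕ ⊕ ℕ`. Then
`W n * H n = M 0 ⋯ M (n-1) * H 0 ⋯ H n` is a product of distinct members of the family, and for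
`k < j`

  `(W j * H j) * (W k * H k) = (W k * H k) ^ 2 * M k ⋯ M (j-1) * H (k+1) ⋯ H j`

is a product of squares of some members and first powers of others. Expectations of such products
factor, giving `E[W n * H n] = μm ^ n * μh ^ (n+1)` and
`E[(W j * H j) * (W k * H k)] = r ^ k * rh * μx ^ (j-k)`, because `μx = μm * μh` and
`E[M i ^ 2] * E[H i ^ 2] = r`.
-/

open MeasureTheory ProbabilityTheory Finset

/-- Covariance of two real-valued random variables. -/
noncomputable def cov {Ω : Type*} [MeasurableSpace Ω] (μ : MeasureTheory.Measure Ω)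
    (f g : Ω → ℝ) : ℝ :=
  ∫ ω, (f ω - ∫ x, f x ∂μ) * (g ω - ∫ x, g x ∂μ) ∂μ

lemma cov_eq_integral_mul_sub {Ω : Type*} [MeasurableSpace Ω] {μ : Measure Ω}
    [IsProbabilityMeasure μ] {f g : Ω → ℝ} (hf : Integrable f μ) (hg : Integrable g μ)
    (hfg : Integrable (fun ω => f ω * g ω) μ) :
    cov μ f g = ∫ ω, f ω * g ω ∂μ - (∫ ω, f ω ∂μ) * ∫ ω, g ω ∂μ := by
  simp only [cov, sub_mul, mul_sub]
  rw [integral_sub, integral_sub hfg (hg.const_mul _), integral_sub (hf.mul_const _)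
    (integrable_const _), integral_mul_const, integral_const_mul, integral_const, probReal_univ,
    one_smul]
  · ring
  · exact hfg.sub (hg.const_mul _)
  · exact (hf.mul_const _).sub (integrable_const _)

lemma Finset.prod_union_ite_mem {ι M : Type*} [CommMonoid M] [DecidableEq ι] {s t : Finset ι}
    (hst : Disjoint s t) (f g : ι → M) :
    ∏ i ∈ s ∪ t, (if i ∈ s then f i else g i) = (∏ i ∈ s, f i) * ∏ i ∈ t, g i := by
  rw [prod_union hst]
  congr 1
  · exact prod_congr rfl fun i hi => if_pos hi
  · exact prod_congr rfl fun i hi => if_neg (disjoint_right.mp hst hi)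

lemma Finset.disjoint_disjSum {α β : Type*} {s s' : Finset α} {t t' : Finset β}
    (hs : Disjoint s s') (ht : Disjoint t t') : Disjoint (s.disjSum t) (s'.disjSum t') := by
  rw [disjoint_left]
  rintro (a | b) h h'
  · exact disjoint_left.mp hs (inl_mem_disjSum.mp h) (inl_mem_disjSum.mp h')
  · exact disjoint_left.mp ht (inr_mem_disjSum.mp h) (inr_mem_disjSum.mp h')

section IndependentProducts

variable {Ω ι : Type*} [MeasurableSpace Ω] {μ : Measure Ω} {Z : ι → Ω → ℝ}

lemma ProbabilityTheory.IndepFun.integral_mul_sq {f g : Ω → ℝ} (hfg : IndepFun f g μ)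
    (hf : AEStronglyMeasurable f μ) (hg : AEStronglyMeasurable g μ) :
    ∫ ω, (f ω * g ω) ^ 2 ∂μ = (∫ ω, f ω ^ 2 ∂μ) * ∫ ω, g ω ^ 2 ∂μ := by
  simp_rw [mul_pow]
  exact (hfg.comp (measurable_id.pow_const 2) (measurable_id.pow_const 2))
    |>.integral_fun_mul_eq_mul_integral (hf.pow 2) (hg.pow 2)

lemma ProbabilityTheory.iIndepFun.sum_elim {β : Type*} [MeasurableSpace β] {f g : ι → Ω → β}
    (h : iIndepFun (fun p : ι × Bool => if p.2 then f p.1 else g p.1) μ) :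
    iIndepFun (Sum.elim f g) μ := by
  have hinj : Function.Injective (Sum.elim (fun i : ι => (i, true)) (fun i => (i, false))) := by
    rintro (a | a) (b | b) hab <;> simp_all
  convert h.precomp hinj using 1
  ext (i | i) <;> rfl

lemma ProbabilityTheory.iIndepFun.integrable_finset_prod [IsProbabilityMeasure μ]
    (hZ : iIndepFun Z μ) (hint : ∀ i, Integrable (Z i) μ) (s : Finset ι) :
    Integrable (fun ω => ∏ i ∈ s, Z i ω) μ := by
  classical
  induction s using Finset.induction_on with
  | empty => simp
  | insert i s hi ih =>
    simp_rw [prod_insert hi]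
    have hind := (hZ.indepFun_finsetProd_of_notMem₀ (fun i => (hint i).aemeasurable) hi).symm
    simpa only [Pi.mul_def, prod_apply] using
      hind.integrable_mul (hint i) (by rwa [← prod_fn] at ih)

lemma ProbabilityTheory.iIndepFun.integral_finset_prod (hZ : iIndepFun Z μ)
    (hZm : ∀ i, AEStronglyMeasurable (Z i) μ) (s : Finset ι) :
    ∫ ω, ∏ i ∈ s, Z i ω ∂μ = ∏ i ∈ s, ∫ ω, Z i ω ∂μ := by
  convert (hZ.precomp (g := ((↑) : s → ι)) Subtype.val_injective).integral_fun_prod_eq_prod_integral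
    (fun i => hZm i) using 1
  · exact integral_congr_ae (ae_of_all _ fun ω => (prod_coe_sort s (Z · ω)).symm)
  · exact (prod_coe_sort s _).symm

lemma ProbabilityTheory.iIndepFun.ite_mem_sq (hZ : iIndepFun Z μ) (s : Finset ι)
    [DecidablePred (· ∈ s)] : iIndepFun (fun i ω => if i ∈ s then Z i ω ^ 2 else Z i ω) μ :=
  hZ.comp (fun i x => if i ∈ s then x ^ 2 else x) fun i => by split_ifs <;> fun_prop

lemma ProbabilityTheory.iIndepFun.integrable_prod_sq_mul_prod [IsProbabilityMeasure μ]
    (hZ : iIndepFun Z μ) (hL2 : ∀ i, MemLp (Z i) 2 μ) {s t : Finset ι} (hst : Disjoint s t) :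
    Integrable (fun ω => (∏ i ∈ s, Z i ω ^ 2) * ∏ i ∈ t, Z i ω) μ := by
  classical
  have hint : ∀ i, Integrable (fun ω => if i ∈ s then Z i ω ^ 2 else Z i ω) μ := fun i => by
    split_ifs
    exacts [(hL2 i).integrable_sq, (hL2 i).integrable one_le_two]
  simpa only [prod_union_ite_mem hst] using (hZ.ite_mem_sq s).integrable_finset_prod hint (s ∪ t)

lemma ProbabilityTheory.iIndepFun.integral_prod_sq_mul_prod (hZ : iIndepFun Z μ)
    (hZm : ∀ i, AEStronglyMeasurable (Z i) μ) {s t : Finset ι} (hst : Disjoint s t) :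
    ∫ ω, (∏ i ∈ s, Z i ω ^ 2) * ∏ i ∈ t, Z i ω ∂μ
      = (∏ i ∈ s, ∫ ω, Z i ω ^ 2 ∂μ) * ∏ i ∈ t, ∫ ω, Z i ω ∂μ := by
  classical
  have hm : ∀ i, AEStronglyMeasurable (fun ω => if i ∈ s then Z i ω ^ 2 else Z i ω) μ := fun i => by
    split_ifs
    exacts [(hZm i).pow 2, hZm i]
  simp_rw [← prod_union_ite_mem hst, (hZ.ite_mem_sq s).integral_finset_prod hm]
  exact prod_congr rfl fun i _ => by split_ifs <;> rfl

end IndependentProducts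

section ProductProcess

variable {Ω : Type*} {M H X W : ℕ → Ω → ℝ}

lemma mul_eq_prod_disjSum (hX : ∀ j ω, X j ω = M j ω * H j ω)
    (hW : ∀ k ω, W k ω = ∏ j ∈ range k, X j ω) (n : ℕ) (ω : Ω) :
    W n ω * H n ω = ∏ p ∈ (range n).disjSum (range (n + 1)), Sum.elim M H p ω := by
  simp only [prod_disjSum, Sum.elim_inl, Sum.elim_inr, hW, hX, prod_mul_distrib, prod_range_succ]
  ring

lemma mul_mul_mul_eq_prod_sq_mul_prod (hX : ∀ j ω, X j ω = M j ω * H j ω)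
    (hW : ∀ k ω, W k ω = ∏ j ∈ range k, X j ω) {j k : ℕ} (hkj : k ≤ j) (ω : Ω) :
    W j ω * H j ω * (W k ω * H k ω)
      = (∏ p ∈ (range k).disjSum (range (k + 1)), Sum.elim M H p ω ^ 2)
        * ∏ p ∈ (Ico k j).disjSum (Ico (k + 1) (j + 1)), Sum.elim M H p ω := by
  simp only [mul_eq_prod_disjSum hX hW, prod_disjSum, Sum.elim_inl, Sum.elim_inr, prod_pow,
    ← prod_range_mul_prod_Ico _ hkj, ← prod_range_mul_prod_Ico _ (Nat.succ_le_succ hkj)]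
  ring

lemma disjoint_disjSum_range_Ico (k j : ℕ) :
    Disjoint ((range k).disjSum (range (k + 1))) ((Ico k j).disjSum (Ico (k + 1) (j + 1))) := by
  apply disjoint_disjSum <;> rw [range_eq_Ico] <;> exact Ico_disjoint_Ico_consecutive _ _ _

end ProductProcess

section ProductProcessMoments

variable {Ω : Type*} [MeasurableSpace Ω] {μ : Measure Ω} {M H X W : ℕ → Ω → ℝ}

lemma integrable_mul_of_iIndepFun [IsProbabilityMeasure μ] (hZ : iIndepFun (Sum.elim M H) μ)
    (hL2 : ∀ p, MemLp (Sum.elim M H p) 2 μ) (hX : ∀ j ω, X j ω = M j ω * H j ω)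
    (hW : ∀ k ω, W k ω = ∏ j ∈ range k, X j ω) (n : ℕ) :
    Integrable (fun ω => W n ω * H n ω) μ := by
  simpa only [mul_eq_prod_disjSum hX hW] using
    hZ.integrable_finset_prod (fun p => (hL2 p).integrable one_le_two) _

lemma integral_mul_eq_pow_mul_pow (hZ : iIndepFun (Sum.elim M H) μ)
    (hZm : ∀ p, AEStronglyMeasurable (Sum.elim M H p) μ) (hX : ∀ j ω, X j ω = M j ω * H j ω)
    (hW : ∀ k ω, W k ω = ∏ j ∈ range k, X j ω) {μm μh : ℝ} (hμm : ∀ j, μ[M j] = μm)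
    (hμh : ∀ j, μ[H j] = μh) (n : ℕ) :
    ∫ ω, W n ω * H n ω ∂μ = μm ^ n * μh ^ (n + 1) := by
  simp_rw [mul_eq_prod_disjSum hX hW n]
  rw [hZ.integral_finset_prod hZm, prod_disjSum]
  simp [hμm, hμh]

lemma integrable_mul_mul_mul_of_iIndepFun [IsProbabilityMeasure μ]
    (hZ : iIndepFun (Sum.elim M H) μ) (hL2 : ∀ p, MemLp (Sum.elim M H p) 2 μ)
    (hX : ∀ j ω, X j ω = M j ω * H j ω) (hW : ∀ k ω, W k ω = ∏ j ∈ range k, X j ω) {j k : ℕ}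
    (hkj : k ≤ j) : Integrable (fun ω => W j ω * H j ω * (W k ω * H k ω)) μ := by
  simpa only [mul_mul_mul_eq_prod_sq_mul_prod hX hW hkj] using
    hZ.integrable_prod_sq_mul_prod hL2 (disjoint_disjSum_range_Ico k j)

lemma integral_mul_mul_mul_eq (hZ : iIndepFun (Sum.elim M H) μ)
    (hZm : ∀ p, AEStronglyMeasurable (Sum.elim M H p) μ) (hX : ∀ j ω, X j ω = M j ω * H j ω)
    (hW : ∀ k ω, W k ω = ∏ j ∈ range k, X j ω) {μm μh r rh : ℝ} (hμm : ∀ j, μ[M j] = μm)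
    (hμh : ∀ j, μ[H j] = μh) (hr : ∀ i, (∫ ω, M i ω ^ 2 ∂μ) * ∫ ω, H i ω ^ 2 ∂μ = r)
    (hrh : ∀ j, μ[fun ω => (H j ω) ^ 2] = rh) {j k : ℕ} (hkj : k ≤ j) :
    ∫ ω, W j ω * H j ω * (W k ω * H k ω) ∂μ = r ^ k * rh * (μm * μh) ^ (j - k) := by
  simp_rw [mul_mul_mul_eq_prod_sq_mul_prod hX hW hkj]
  rw [hZ.integral_prod_sq_mul_prod hZm (disjoint_disjSum_range_Ico k j)]
  simp only [prod_disjSum, Sum.elim_inl, Sum.elim_inr]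
  rw [prod_range_succ _ k, ← mul_assoc (∏ i ∈ range k, _), ← prod_mul_distrib,
    prod_congr rfl fun i _ => hr i]
  simp only [hrh, hμm, hμh, prod_const, card_range, Nat.card_Ico, Nat.add_sub_add_right]
  ring

end ProductProcessMoments

theorem cov_product_iid'_general
    {Ω : Type*} [MeasurableSpace Ω] (μ : Measure Ω) [IsProbabilityMeasure μ]
    (M H : ℕ → Ω → ℝ) (X : ℕ → Ω → ℝ) (μm μh μx r rh : ℝ)
    (hX : ∀ j ω, X j ω = M j ω * H j ω)
    (hindep : iIndepFun
      (fun p : ℕ × Bool => if p.2 then M p.1 else H p.1) μ)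
    (hL2M : ∀ j, MemLp (M j) 2 μ) (hL2H : ∀ j, MemLp (H j) 2 μ)
    (hμm : ∀ j, μ[M j] = μm) (hμh : ∀ j, μ[H j] = μh)
    (hμx : ∀ j, μ[X j] = μx) (hr : ∀ j, μ[fun ω => (X j ω) ^ 2] = r)
    (hrh : ∀ j, μ[fun ω => (H j ω) ^ 2] = rh)
    (W : ℕ → Ω → ℝ) (hW : ∀ k ω, W k ω = ∏ j ∈ Finset.range k, X j ω) :
    ∀ j k : ℕ, k < j →
      cov μ (fun ω => W j ω * H j ω) (fun ω => W k ω * H k ω)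
        = (r ^ k * rh - μx ^ (2 * k) * μh ^ 2) * μm * μh * μx ^ (j - k - 1) := by
  intro j k hkj
  have hZ : iIndepFun (Sum.elim M H) μ := hindep.sum_elim
  have hL2 : ∀ p, MemLp (Sum.elim M H p) 2 μ := by rintro (i | i); exacts [hL2M i, hL2H i]
  have hMH : ∀ i, IndepFun (M i) (H i) μ := fun i => hZ.indepFun Sum.inl_ne_inr
  have hμx_mul : μx = μm * μh := by
    rw [← hμx 0, ← hμm 0, ← hμh 0, funext (hX 0)]
    exact (hMH 0).integral_fun_mul_eq_mul_integral (hL2M 0).1 (hL2H 0).1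
  have hr_mul : ∀ i, (∫ ω, M i ω ^ 2 ∂μ) * ∫ ω, H i ω ^ 2 ∂μ = r := fun i => by
    rw [← hr i, ← (hMH i).integral_mul_sq (hL2M i).1 (hL2H i).1]
    simp only [hX]
  have hZm : ∀ p, AEStronglyMeasurable (Sum.elim M H p) μ := fun p => (hL2 p).1
  have hV := integral_mul_eq_pow_mul_pow hZ hZm hX hW hμm hμh
  rw [cov_eq_integral_mul_sub (integrable_mul_of_iIndepFun hZ hL2 hX hW j)
    (integrable_mul_of_iIndepFun hZ hL2 hX hW k)
    (integrable_mul_mul_mul_of_iIndepFun hZ hL2 hX hW hkj.le),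
    integral_mul_mul_mul_eq hZ hZm hX hW hμm hμh hr_mul hrh hkj.le, hV, hV, hμx_mul]
  obtain ⟨d, rfl⟩ := Nat.exists_eq_add_of_lt hkj
  rw [show k + d + 1 - k = d + 1 by omega, Nat.add_sub_cancel]
  ring

/-- With `X j = M j * H j` as in Statement 1 and `W k = ∏_{j<k} X j`,
for `k < j` one has
`Cov(W j * H j, W k * H k) = (r^k * r_h - μx^(2k) * μh^2) * μm * μh * μx^(j-k-1)`. -/
theorem cov_product_iid'
    {Ω : Type*} [MeasurableSpace Ω] (μ : Measure Ω) [IsProbabilityMeasure μ]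
    (M H : ℕ → Ω → ℝ) (X : ℕ → Ω → ℝ) (μm μh μx r rh : ℝ)
    (hmeasM : ∀ j, Measurable (M j)) (hmeasH : ∀ j, Measurable (H j))
    (hX : ∀ j ω, X j ω = M j ω * H j ω)
    (hindep : iIndepFun
      (fun p : ℕ × Bool => if p.2 then M p.1 else H p.1) μ)
    (hidentM : ∀ j, IdentDistrib (M j) (M 0) μ μ)
    (hidentH : ∀ j, IdentDistrib (H j) (H 0) μ μ)
    (hL2M : ∀ j, MemLp (M j) 2 μ) (hL2H : ∀ j, MemLp (H j) 2 μ)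
    (hμm : ∀ j, μ[M j] = μm) (hμh : ∀ j, μ[H j] = μh)
    (hμx : ∀ j, μ[X j] = μx) (hr : ∀ j, μ[fun ω => (X j ω) ^ 2] = r)
    (hrh : ∀ j, μ[fun ω => (H j ω) ^ 2] = rh)
    (W : ℕ → Ω → ℝ) (hW : ∀ k ω, W k ω = ∏ j ∈ Finset.range k, X j ω) :
    ∀ j k : ℕ, k < j →
      cov μ (fun ω => W j ω * H j ω) (fun ω => W k ω * H k ω)
        = (r ^ k * rh - μx ^ (2 * k) * μh ^ 2) * μm * μh * μx ^ (j - k - 1) :=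
  cov_product_iid'_general μ M H X μm μh μx r rh hX hindep hL2M hL2H hμm hμh hμx hr hrh W hW
end

section
/- For the Euler-Maruyama scheme for the IGBM, if $|1-\Delta/\tau|<1$ and $\Delta < 2\tau - \sigma^2\tau^2$, then the asymptotic variance is $\lim_{i\to\infty}\mathrm{Var}(\widetilde{Y}(t_i)\mid Y_0) = \frac{(\mu\tau)^2}{\frac{2}{\sigma^2\tau} - 1 - \frac{\Delta}{\sigma^2\tau^2}}$. -/
/-!
With `a = 1 - Δ/τ` and `Z i = a + σ ξ i`, the scheme is the random affine recursion
`Y (i+1) = Y i * Z i + μ'Δ`. Since `Y i` is a function of `ξ 0, …, ξ (i-1)`, it is independent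
of `Z i`, and the recursion yields deterministic affine recursions for the mean and the variance:
`m (i+1) = a m i + μ'Δ` and `v (i+1) = (σ²Δ + a²) v i + σ²Δ (m i)²`. Both contraction factors lie
in `(-1, 1)` under the two stability hypotheses, so `m i → μ'Δ / (1 - a) = μ'τ` and
`v i → σ²Δ (μ'τ)² / (1 - σ²Δ - a²)`, which is the claimed limit.
-/

open MeasureTheory ProbabilityTheory Filter Topology

lemma sub_le_pow_mul_sub_of_le_mul_add {r ε : ℝ} {u : ℕ → ℝ} (hr : 0 ≤ r)
    (h : ∀ n, u (n + 1) ≤ r * u n + (1 - r) * ε) (n : ℕ) :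
    u n - ε ≤ r ^ n * (u 0 - ε) := by
  induction n with
  | zero => simp
  | succ n ih =>
    calc u (n + 1) - ε ≤ r * (u n - ε) := by linarith [h n]
      _ ≤ r * (r ^ n * (u 0 - ε)) := mul_le_mul_of_nonneg_left ih hr
      _ = r ^ (n + 1) * (u 0 - ε) := by ring

lemma tendsto_zero_of_affine_recurrence {b : ℝ} (hb : |b| < 1) {z δ : ℕ → ℝ}
    (hrec : ∀ n, z (n + 1) = b * z n + δ n) (hδ : Tendsto δ atTop (𝓝 0)) :
    Tendsto z atTop (𝓝 0) := by
  rw [Metric.tendsto_atTop]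
  intro ε hε
  have h1r : 0 < 1 - |b| := by linarith
  obtain ⟨N, hN⟩ := Metric.tendsto_atTop.1 hδ ((1 - |b|) * (ε / 2)) (by positivity)
  have hstep : ∀ k, |z (N + (k + 1))| ≤ |b| * |z (N + k)| + (1 - |b|) * (ε / 2) := fun k => by
    have := hN (N + k) (by omega)
    rw [Real.dist_eq, sub_zero] at this
    rw [← add_assoc, hrec, ← abs_mul]
    linarith [abs_add_le (b * z (N + k)) (δ (N + k))]
  have hgeom := sub_le_pow_mul_sub_of_le_mul_add (u := fun k => |z (N + k)|) (abs_nonneg b) hstep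
  have hpow : Tendsto (fun k => |b| ^ k * (|z N| - ε / 2)) atTop (𝓝 0) := by
    simpa using (tendsto_pow_atTop_nhds_zero_of_lt_one (abs_nonneg b) hb).mul_const _
  obtain ⟨K, hK⟩ := eventually_atTop.1 (hpow.eventually_lt_const (half_pos hε))
  refine ⟨N + K, fun n hn => ?_⟩
  obtain ⟨k, rfl⟩ := Nat.exists_eq_add_of_le (le_trans (Nat.le_add_right N K) hn)
  rw [Real.dist_eq, sub_zero]
  have hk := hgeom k
  simp only [add_zero] at hk
  linarith [hK k (by omega)]

lemma tendsto_of_affine_recurrence {b : ℝ} (hb : |b| < 1) {x g : ℕ → ℝ} {G : ℝ}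
    (hrec : ∀ n, x (n + 1) = b * x n + g n) (hg : Tendsto g atTop (𝓝 G)) :
    Tendsto x atTop (𝓝 (G / (1 - b))) := by
  have hb1 : 1 - b ≠ 0 := by linarith [le_abs_self b]
  have hz : Tendsto (fun n => x n - G / (1 - b)) atTop (𝓝 0) := by
    refine tendsto_zero_of_affine_recurrence hb (fun n => ?_) (tendsto_sub_nhds_zero_iff.2 hg)
    rw [hrec]
    field_simp
    ring
  simpa using hz.add_const (G / (1 - b))

lemma sq_mul_add_one_sub_div_sq_lt_one {τ σ Δ : ℝ} (hτ : 0 < τ) (hΔ : 0 < Δ)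
    (h : Δ < 2 * τ - σ ^ 2 * τ ^ 2) : σ ^ 2 * Δ + (1 - Δ / τ) ^ 2 < 1 := by
  have hdiff : σ ^ 2 * Δ + (1 - Δ / τ) ^ 2 - 1 = Δ * (Δ - (2 * τ - σ ^ 2 * τ ^ 2)) / τ ^ 2 := by
    field_simp
    ring
  have : Δ * (Δ - (2 * τ - σ ^ 2 * τ ^ 2)) / τ ^ 2 < 0 :=
    div_neg_of_neg_of_pos (mul_neg_of_pos_of_neg hΔ (by linarith)) (by positivity)
  linarith

namespace ProbabilityTheory

variable {Ω : Type*}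

structure IsRandomAffineRec (Y Z : ℕ → Ω → ℝ) (y₀ c : ℝ) : Prop where
  zero : ∀ ω, Y 0 ω = y₀
  succ : ∀ i ω, Y (i + 1) ω = Y i ω * Z i ω + c

lemma IsRandomAffineRec.measurable_iSup_comap {Y Z : ℕ → Ω → ℝ} {y₀ c : ℝ}
    (h : IsRandomAffineRec Y Z y₀ c) (i : ℕ) :
    Measurable[⨆ j ∈ Set.Iio i, MeasurableSpace.comap (Z j) inferInstance] (Y i) := by
  induction i with
  | zero =>
    rw [show Y 0 = fun _ => y₀ from funext h.zero]
    exact measurable_const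
  | succ i ih =>
    have hpast : ⨆ j ∈ Set.Iio i, MeasurableSpace.comap (Z j) inferInstance
        ≤ ⨆ j ∈ Set.Iio (i + 1), MeasurableSpace.comap (Z j) inferInstance :=
      biSup_mono fun _ hj => Nat.lt_succ_of_lt hj
    have hnow : MeasurableSpace.comap (Z i) inferInstance
        ≤ ⨆ j ∈ Set.Iio (i + 1), MeasurableSpace.comap (Z j) inferInstance :=
      le_iSup₂_of_le i (Nat.lt_succ_self i) le_rfl
    rw [show Y (i + 1) = fun ω => Y i ω * Z i ω + c from funext (h.succ i)]
    exact ((ih.mono hpast le_rfl).mul ((comap_measurable (Z i)).mono hnow le_rfl)).add_const c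

variable [MeasurableSpace Ω] {μ : Measure Ω}

lemma IndepFun.memLp_two_mul {X Z : Ω → ℝ} (h : X ⟂ᵢ[μ] Z) (hX : MemLp X 2 μ)
    (hZ : MemLp Z 2 μ) : MemLp (X * Z) 2 μ := by
  have hsq : (X ^ 2) ⟂ᵢ[μ] (Z ^ 2) :=
    h.comp (continuous_pow 2).measurable (continuous_pow 2).measurable
  rw [memLp_two_iff_integrable_sq (hX.aestronglyMeasurable.mul hZ.aestronglyMeasurable)]
  simp_rw [Pi.mul_apply, mul_pow]
  exact hsq.integrable_mul hX.integrable_sq hZ.integrable_sq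

lemma IndepFun.variance_mul [IsProbabilityMeasure μ] {X Z : Ω → ℝ} (h : X ⟂ᵢ[μ] Z)
    (hX : MemLp X 2 μ) (hZ : MemLp Z 2 μ) :
    Var[X * Z; μ] = Var[X; μ] * (Var[Z; μ] + μ[Z] ^ 2) + μ[X] ^ 2 * Var[Z; μ] := by
  have hsq : (X ^ 2) ⟂ᵢ[μ] (Z ^ 2) :=
    h.comp (continuous_pow 2).measurable (continuous_pow 2).measurable
  rw [variance_eq_sub (h.memLp_two_mul hX hZ), variance_eq_sub hX, variance_eq_sub hZ, mul_pow,
    hsq.integral_mul_eq_mul_integral hX.integrable_sq.aestronglyMeasurable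
      hZ.integrable_sq.aestronglyMeasurable,
    h.integral_mul_eq_mul_integral hX.aestronglyMeasurable hZ.aestronglyMeasurable]
  ring

lemma memLp_of_hasLaw_gaussianReal {X : Ω → ℝ} {m : ℝ} {v : NNReal}
    (hX : HasLaw X (gaussianReal m v) μ) {p : ENNReal} (hp : p ≠ ⊤) : MemLp X p μ := by
  have h := memLp_id_gaussianReal' (μ := m) (v := v) p hp
  rw [← hX.map_eq] at h
  exact (memLp_map_measure_iff aestronglyMeasurable_id hX.aemeasurable).1 h

namespace IsRandomAffineRec

variable {Y Z : ℕ → Ω → ℝ} {y₀ c : ℝ}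

lemma indepFun (h : IsRandomAffineRec Y Z y₀ c) (hZ : ∀ i, Measurable (Z i))
    (hind : iIndepFun Z μ) (i : ℕ) : Y i ⟂ᵢ[μ] Z i := by
  have hpast := indep_iSup_of_disjoint (fun j => (hZ j).comap_le) hind.iIndep
    (Set.disjoint_singleton_right.2 (lt_irrefl i) : Disjoint (Set.Iio i) {i})
  rw [iSup_singleton] at hpast
  exact indep_of_indep_of_le_left hpast (h.measurable_iSup_comap i).comap_le

lemma memLp_two [IsFiniteMeasure μ] (h : IsRandomAffineRec Y Z y₀ c)
    (hZ : ∀ i, Measurable (Z i)) (hind : iIndepFun Z μ) (hZ2 : ∀ i, MemLp (Z i) 2 μ) (i : ℕ) :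
    MemLp (Y i) 2 μ := by
  induction i with
  | zero =>
    rw [show Y 0 = fun _ => y₀ from funext h.zero]
    exact memLp_const y₀
  | succ i ih =>
    rw [show Y (i + 1) = fun ω => (Y i * Z i) ω + c from funext (h.succ i)]
    exact ((h.indepFun hZ hind i).memLp_two_mul ih (hZ2 i)).add (memLp_const c)

lemma integral_succ [IsProbabilityMeasure μ] (h : IsRandomAffineRec Y Z y₀ c)
    (hZ : ∀ i, Measurable (Z i)) (hind : iIndepFun Z μ) (hZ2 : ∀ i, MemLp (Z i) 2 μ) (i : ℕ) :
    μ[Y (i + 1)] = μ[Y i] * μ[Z i] + c := by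
  have hprod := (h.indepFun hZ hind i).memLp_two_mul (h.memLp_two hZ hind hZ2 i) (hZ2 i)
  rw [show Y (i + 1) = fun ω => (Y i * Z i) ω + c from funext (h.succ i),
    integral_add (hprod.integrable one_le_two) (integrable_const c), integral_const,
    (h.indepFun hZ hind i).integral_mul_eq_mul_integral
      (h.memLp_two hZ hind hZ2 i).aestronglyMeasurable (hZ2 i).aestronglyMeasurable]
  simp

lemma variance_succ [IsProbabilityMeasure μ] (h : IsRandomAffineRec Y Z y₀ c)
    (hZ : ∀ i, Measurable (Z i)) (hind : iIndepFun Z μ) (hZ2 : ∀ i, MemLp (Z i) 2 μ) (i : ℕ) :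
    Var[Y (i + 1); μ] = Var[Y i; μ] * (Var[Z i; μ] + μ[Z i] ^ 2) + μ[Y i] ^ 2 * Var[Z i; μ] := by
  have hprod := (h.indepFun hZ hind i).memLp_two_mul (h.memLp_two hZ hind hZ2 i) (hZ2 i)
  rw [show Y (i + 1) = fun ω => (Y i * Z i) ω + c from funext (h.succ i),
    variance_add_const hprod.aestronglyMeasurable,
    (h.indepFun hZ hind i).variance_mul (h.memLp_two hZ hind hZ2 i) (hZ2 i)]

end IsRandomAffineRec

end ProbabilityTheory

/-- For the Euler-Maruyama scheme for the IGBM, if `|1 - Δ/τ| < 1` and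
`Δ < 2τ - σ²τ²`, then `Var(Y i ∣ Y₀) → (μ'τ)² / (2/(σ²τ) - 1 - Δ/(σ²τ²))`. -/
theorem euler_maruyama_asymptotic_variance
    {Ω : Type*} [MeasurableSpace Ω] (μ : Measure Ω) [IsProbabilityMeasure μ]
    (ξ : ℕ → Ω → ℝ) (τ σ μ' y0 : ℝ) (Δ : NNReal)
    (hτ : 0 < τ) (hσ : 0 < σ) (hΔ : 0 < (Δ : ℝ))
    (hmeas : ∀ i, Measurable (ξ i))
    (hindep : iIndepFun ξ μ)
    (hgauss : ∀ i, Measure.map (ξ i) μ = gaussianReal 0 Δ)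
    (Y : ℕ → Ω → ℝ)
    (hY0 : ∀ ω, Y 0 ω = y0)
    (hYrec : ∀ i ω, Y (i + 1) ω = Y i ω * (1 - (Δ : ℝ) / τ + σ * ξ i ω) + μ' * (Δ : ℝ))
    (hstab : |1 - (Δ : ℝ) / τ| < 1)
    (hstab2 : (Δ : ℝ) < 2 * τ - σ ^ 2 * τ ^ 2) :
    Tendsto (fun i : ℕ => variance (Y i) μ) atTop
      (nhds ((μ' * τ) ^ 2 / (2 / (σ ^ 2 * τ) - 1 - (Δ : ℝ) / (σ ^ 2 * τ ^ 2)))) := by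
  set a := 1 - (Δ : ℝ) / τ with ha
  set Z : ℕ → Ω → ℝ := fun i ω => a + σ * ξ i ω
  have hZ : ∀ i, Measurable (Z i) := fun i => (hmeas i).const_mul σ |>.const_add a
  have hZind : iIndepFun Z μ := hindep.comp (fun _ x => a + σ * x) fun _ => by fun_prop
  have hZlaw : ∀ i, HasLaw (Z i) (gaussianReal (σ * 0 + a) (⟨σ ^ 2, sq_nonneg σ⟩ * Δ)) μ :=
    fun i => gaussianReal_const_add (gaussianReal_const_mul ⟨(hmeas i).aemeasurable, hgauss i⟩ σ) a
  have hZ2 : ∀ i, MemLp (Z i) 2 μ := fun i => memLp_of_hasLaw_gaussianReal (hZlaw i) (by simp)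
  have hZmean : ∀ i, μ[Z i] = a := fun i => by simp [(hZlaw i).integral_eq]
  have hZvar : ∀ i, Var[Z i; μ] = σ ^ 2 * Δ := fun i => by
    rw [(hZlaw i).variance_eq, variance_id_gaussianReal]
    rfl
  have hY : IsRandomAffineRec Y Z y0 (μ' * Δ) := ⟨hY0, hYrec⟩
  have hmean : Tendsto (fun i => μ[Y i]) atTop (𝓝 (μ' * τ)) := by
    have h := tendsto_of_affine_recurrence hstab (x := fun i => μ[Y i]) (g := fun _ => μ' * Δ)
      (fun i => by rw [hY.integral_succ hZ hZind hZ2, hZmean, mul_comm]) tendsto_const_nhds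
    convert h using 2
    rw [ha, sub_sub_cancel]
    field_simp
  have hb : |σ ^ 2 * Δ + a ^ 2| < 1 :=
    abs_lt.2 ⟨by linarith [show 0 ≤ σ ^ 2 * Δ + a ^ 2 by positivity],
      sq_mul_add_one_sub_div_sq_lt_one hτ hΔ hstab2⟩
  have hgap : 1 - (σ ^ 2 * Δ + a ^ 2) = σ ^ 2 * Δ * (2 / (σ ^ 2 * τ) - 1 - Δ / (σ ^ 2 * τ ^ 2)) := by
    rw [ha]
    field_simp
    ring
  have hvar := tendsto_of_affine_recurrence hb (x := fun i => Var[Y i; μ])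
    (fun i => by rw [hY.variance_succ hZ hZind hZ2, hZmean, hZvar]; ring)
    ((hmean.pow 2).const_mul (σ ^ 2 * Δ))
  rwa [hgap, mul_div_mul_left _ _ (by positivity)] at hvar
end

section
/- For the Milstein scheme for the IGBM, if $|1-\Delta/\tau|<1$ and $\Delta < \frac{2\tau-\sigma^2\tau^2}{\frac{\sigma^4\tau^2}{2}+1}$, then $\lim_{i\to\infty}\mathrm{Var}(\widetilde{Y}(t_i)\mid Y_0) = \frac{(\mu\tau)^2(1+\frac{\sigma^2\Delta}{2})}{\frac{2}{\sigma^2\tau}-1-\frac{\Delta}{\sigma^2\tau^2}-\frac{\sigma^2\Delta}{2}}$. -/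
/-!
Write the scheme as `Y (i + 1) = Y i * M i + μ' Δ`, where the multiplier
`M i = 1 - Δ/τ + σ ξ i + σ²/2 (ξ i ² - Δ)` is independent of `Y i` (which only depends on
`ξ 0, …, ξ (i - 1)`), with mean `a = 1 - Δ/τ` and second moment `b = a² + σ²Δ + σ⁴Δ²/2`;
the latter uses the Gaussian moments `E ξ³ = 0`, `E ξ⁴ = 3Δ²`, read off the derivatives at `0`
of the moment generating function `exp (Δ t² / 2)`. Then the mean and the variance obey the
affine recurrences `m' = a m + μ'Δ` and `V' = b V + (b - a²) m²`. The first stability condition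
is `|a| < 1` and the second one is `b < 1`, so `m → μ'τ` and `V → (b - a²) (μ'τ)² / (1 - b)`,
which is the stated limit.
-/

open MeasureTheory ProbabilityTheory Filter Real
open scoped NNReal Topology

lemma tendsto_zero_of_affine_recurrence_s11 {r : ℝ} {e d : ℕ → ℝ} (hr : |r| < 1)
    (he : ∀ n, e (n + 1) = r * e n + d n) (hd : Tendsto d atTop (𝓝 0)) :
    Tendsto e atTop (𝓝 0) := by
  rw [Metric.tendsto_atTop]
  intro ε hε
  obtain ⟨N, hN⟩ := Metric.tendsto_atTop.1 hd ((1 - |r|) * (ε / 2))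
    (mul_pos (by linarith) (half_pos hε))
  have hstep : ∀ n ≥ N, |e (n + 1)| - ε / 2 ≤ |r| * (|e n| - ε / 2) := fun n hn => by
    have hdn : |d n| < (1 - |r|) * (ε / 2) := by simpa using hN n hn
    calc |e (n + 1)| - ε / 2 ≤ |r| * |e n| + |d n| - ε / 2 := by
          rw [he, ← abs_mul]; linarith [abs_add_le (r * e n) (d n)]
      _ ≤ |r| * (|e n| - ε / 2) := by linarith
  have hiter : ∀ k, |e (N + k)| - ε / 2 ≤ |r| ^ k * (|e N| - ε / 2) := by
    intro k
    induction k with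
    | zero => simp
    | succ k ih =>
      calc |e (N + k + 1)| - ε / 2 ≤ |r| * (|e (N + k)| - ε / 2) := hstep _ (by omega)
        _ ≤ |r| * (|r| ^ k * (|e N| - ε / 2)) := mul_le_mul_of_nonneg_left ih (abs_nonneg r)
        _ = |r| ^ (k + 1) * (|e N| - ε / 2) := by ring
  have hgeom : Tendsto (fun k => |r| ^ k * (|e N| - ε / 2)) atTop (𝓝 0) := by
    simpa using (tendsto_pow_atTop_nhds_zero_of_lt_one (abs_nonneg r) hr).mul_const _
  obtain ⟨K, hK⟩ := eventually_atTop.1 (hgeom.eventually (gt_mem_nhds (half_pos hε)))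
  refine ⟨N + K, fun n hn => ?_⟩
  obtain ⟨k, rfl⟩ := Nat.exists_eq_add_of_le hn
  rw [Real.dist_eq, sub_zero, add_assoc]
  linarith [hiter (K + k), hK (K + k) (by omega)]

lemma tendsto_of_affine_recurrence_s11 {r c : ℝ} {x d : ℕ → ℝ} (hr : |r| < 1)
    (hx : ∀ n, x (n + 1) = r * x n + d n) (hd : Tendsto d atTop (𝓝 c)) :
    Tendsto x atTop (𝓝 (c / (1 - r))) := by
  have hr₁ : 1 - r ≠ 0 := by linarith [le_abs_self r]
  have he : ∀ n, x (n + 1) - c / (1 - r) = r * (x n - c / (1 - r)) + (d n - c) := fun n => by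
    rw [hx]; field_simp; ring
  have := tendsto_zero_of_affine_recurrence_s11 (e := fun n => x n - c / (1 - r)) hr he
    (by simpa using hd.sub_const c)
  simpa using this.add_const (c / (1 - r))

lemma iteratedDeriv_succ_exp_mul_sq_div_two {v : ℝ} {n : ℕ} {P P' Q : ℝ → ℝ}
    (hP : ∀ t, HasDerivAt P (P' t) t) (hQ : ∀ t, Q t = P' t + v * t * P t)
    (hn : iteratedDeriv n (fun t => exp (v * t ^ 2 / 2)) = fun t => P t * exp (v * t ^ 2 / 2)) :
    iteratedDeriv (n + 1) (fun t => exp (v * t ^ 2 / 2)) = fun t => Q t * exp (v * t ^ 2 / 2) := by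
  rw [iteratedDeriv_succ, hn]
  funext t
  have hexp : HasDerivAt (fun t => exp (v * t ^ 2 / 2)) (exp (v * t ^ 2 / 2) * (v * t)) t := by
    convert (((hasDerivAt_pow 2 t).const_mul v).div_const 2).exp using 1
    push_cast; ring
  rw [((hP t).fun_mul hexp).deriv, hQ]
  ring

lemma iteratedDeriv_two_exp_mul_sq_div_two (v : ℝ) :
    iteratedDeriv 2 (fun t => exp (v * t ^ 2 / 2))
      = fun t => (v + v ^ 2 * t ^ 2) * exp (v * t ^ 2 / 2) := by
  have h₀ : iteratedDeriv 0 (fun t => exp (v * t ^ 2 / 2)) = fun t => 1 * exp (v * t ^ 2 / 2) := by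
    simp
  have h₁ := iteratedDeriv_succ_exp_mul_sq_div_two (Q := fun t => v * t)
    (fun t => hasDerivAt_const t 1) (fun t => by ring) h₀
  exact iteratedDeriv_succ_exp_mul_sq_div_two
    (fun t => (hasDerivAt_id t).const_mul v) (fun t => by simp; ring) h₁

lemma iteratedDeriv_three_exp_mul_sq_div_two (v : ℝ) :
    iteratedDeriv 3 (fun t => exp (v * t ^ 2 / 2))
      = fun t => (3 * v ^ 2 * t + v ^ 3 * t ^ 3) * exp (v * t ^ 2 / 2) :=
  iteratedDeriv_succ_exp_mul_sq_div_two
    (fun t => ((hasDerivAt_pow 2 t).const_mul (v ^ 2)).const_add v) (fun t => by simp; ring)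
    (iteratedDeriv_two_exp_mul_sq_div_two v)

lemma iteratedDeriv_four_exp_mul_sq_div_two (v : ℝ) :
    iteratedDeriv 4 (fun t => exp (v * t ^ 2 / 2))
      = fun t => (3 * v ^ 2 + 6 * v ^ 3 * t ^ 2 + v ^ 4 * t ^ 4) * exp (v * t ^ 2 / 2) :=
  iteratedDeriv_succ_exp_mul_sq_div_two
    (fun t => ((hasDerivAt_id t).const_mul (3 * v ^ 2)).add
      ((hasDerivAt_pow 3 t).const_mul (v ^ 3)))
    (fun t => by simp; ring) (iteratedDeriv_three_exp_mul_sq_div_two v)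

lemma integral_sum_mul_pow {ν : Measure ℝ} {n : ℕ}
    (hpow : ∀ k : ℕ, Integrable (fun x : ℝ => x ^ k) ν) (c : Fin n → ℝ) :
    ∫ x, ∑ k, c k * x ^ (k : ℕ) ∂ν = ∑ k, c k * ∫ x, x ^ (k : ℕ) ∂ν := by
  rw [integral_finsetSum _ fun (k : Fin n) _ => (hpow k).const_mul (c k)]
  simp_rw [integral_const_mul]

namespace ProbabilityTheory

section GaussianMoments

variable {v : ℝ≥0}

lemma integrable_pow_gaussianReal (m : ℝ) (n : ℕ) :
    Integrable (fun x : ℝ => x ^ n) (gaussianReal m v) :=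
  integrable_pow_of_mem_interior_integrableExpSet (by simp) n

lemma integral_pow_gaussianReal_zero (n : ℕ) :
    ∫ x, x ^ n ∂gaussianReal 0 v = iteratedDeriv n (fun t => exp (v * t ^ 2 / 2)) 0 := by
  have := iteratedDeriv_mgf_zero (X := fun x => x) (μ := gaussianReal 0 v) (by simp) n
  rw [mgf_fun_id_gaussianReal] at this
  simpa using this.symm

lemma integral_sq_gaussianReal_zero : ∫ x, x ^ 2 ∂gaussianReal 0 v = v := by
  simp [integral_pow_gaussianReal_zero, iteratedDeriv_two_exp_mul_sq_div_two]

lemma integral_pow_three_gaussianReal_zero : ∫ x, x ^ 3 ∂gaussianReal 0 v = 0 := by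
  simp [integral_pow_gaussianReal_zero, iteratedDeriv_three_exp_mul_sq_div_two]

lemma integral_pow_four_gaussianReal_zero : ∫ x, x ^ 4 ∂gaussianReal 0 v = 3 * v ^ 2 := by
  simp [integral_pow_gaussianReal_zero, iteratedDeriv_four_exp_mul_sq_div_two]

end GaussianMoments

lemma iIndepFun.indepFun_of_measurable_iSup_lt {Ω ι β γ : Type*} [MeasurableSpace Ω]
    {μ : Measure Ω} [Preorder ι] [mβ : MeasurableSpace β] [MeasurableSpace γ] {ξ : ι → Ω → β}
    (hξ : ∀ i, Measurable (ξ i)) (hindep : iIndepFun ξ μ) {i : ι} {X : Ω → γ}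
    (hX : Measurable[⨆ j < i, MeasurableSpace.comap (ξ j) mβ] X) : IndepFun X (ξ i) μ := by
  have h := indep_iSup_of_disjoint (fun j => (hξ j).comap_le) hindep.iIndep
    (S := Set.Iio i) (T := {i}) (by simp)
  rw [IndepFun_iff_Indep]
  simp only [Set.mem_Iio, Set.mem_singleton_iff, iSup_iSup_eq_left] at h
  exact indep_of_indep_of_le_left h hX.comap_le

lemma measurable_iSup_lt_of_recurrence {Ω β γ : Type*} [mβ : MeasurableSpace β]
    [MeasurableSpace γ] {ξ : ℕ → Ω → β} {Y : ℕ → Ω → γ} {F : γ → β → γ}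
    (hF : Measurable (Function.uncurry F)) (y₀ : γ) (hY₀ : ∀ ω, Y 0 ω = y₀)
    (hrec : ∀ i ω, Y (i + 1) ω = F (Y i ω) (ξ i ω)) (i : ℕ) :
    Measurable[⨆ j < i, MeasurableSpace.comap (ξ j) mβ] (Y i) := by
  induction i with
  | zero => rw [show Y 0 = fun _ => y₀ from funext hY₀]; exact measurable_const
  | succ i ih =>
    have hle : (⨆ j < i, MeasurableSpace.comap (ξ j) mβ)
        ≤ ⨆ j < i + 1, MeasurableSpace.comap (ξ j) mβ :=
      biSup_mono fun j hj => by omega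
    have hξ : Measurable[⨆ j < i + 1, MeasurableSpace.comap (ξ j) mβ] (ξ i) :=
      (comap_measurable (ξ i)).mono
        (le_iSup₂ (f := fun j _ => MeasurableSpace.comap (ξ j) mβ) i (Nat.lt_succ_self i)) le_rfl
    rw [show Y (i + 1) = fun ω => F (Y i ω) (ξ i ω) from funext (hrec i)]
    exact hF.comp ((ih.mono hle le_rfl).prodMk hξ)

variable {Ω : Type*} [MeasurableSpace Ω] {μ : Measure Ω}

lemma IndepFun.memLp_two_fun_mul {X M : Ω → ℝ} (hXM : IndepFun X M μ) (hX : MemLp X 2 μ)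
    (hM : MemLp M 2 μ) : MemLp (fun ω => X ω * M ω) 2 μ := by
  have hsq : IndepFun (fun ω => X ω ^ 2) (fun ω => M ω ^ 2) μ :=
    hXM.comp (measurable_id.pow_const 2) (measurable_id.pow_const 2)
  refine (memLp_two_iff_integrable_sq (f := fun ω => X ω * M ω) (hX.1.mul hM.1)).2 ?_
  simpa only [mul_pow, Pi.mul_def] using hsq.integrable_mul
    ((memLp_two_iff_integrable_sq hX.1).1 hX) ((memLp_two_iff_integrable_sq hM.1).1 hM)

lemma IndepFun.variance_fun_mul [IsProbabilityMeasure μ] {X M : Ω → ℝ} (hXM : IndepFun X M μ)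
    (hX : MemLp X 2 μ) (hM : MemLp M 2 μ) :
    Var[fun ω => X ω * M ω; μ] = μ[fun ω => M ω ^ 2] * Var[X; μ] + Var[M; μ] * μ[X] ^ 2 := by
  have hsq : IndepFun (fun ω => X ω ^ 2) (fun ω => M ω ^ 2) μ :=
    hXM.comp (measurable_id.pow_const 2) (measurable_id.pow_const 2)
  rw [variance_eq_sub (hXM.memLp_two_fun_mul hX hM), variance_eq_sub hX, variance_eq_sub hM]
  simp only [Pi.pow_apply, mul_pow]
  rw [hsq.integral_fun_mul_eq_mul_integral (hX.1.pow 2) (hM.1.pow 2),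
    hXM.integral_fun_mul_eq_mul_integral hX.1 hM.1]
  ring

theorem tendsto_variance_of_random_affine_recurrence [IsProbabilityMeasure μ] {Y M : ℕ → Ω → ℝ}
    {q a b : ℝ} (hrec : ∀ i, Y (i + 1) = fun ω => Y i ω * M i ω + q) (hY₀ : MemLp (Y 0) 2 μ)
    (hindep : ∀ i, IndepFun (Y i) (M i) μ) (hM : ∀ i, MemLp (M i) 2 μ)
    (hmean : ∀ i, μ[M i] = a) (hsq : ∀ i, ∫ ω, M i ω ^ 2 ∂μ = b) (ha : |a| < 1) (hb : b < 1) :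
    Tendsto (fun i => Var[Y i; μ]) atTop (𝓝 ((b - a ^ 2) * (q / (1 - a)) ^ 2 / (1 - b))) := by
  have hY : ∀ i, MemLp (Y i) 2 μ := by
    intro i
    induction i with
    | zero => exact hY₀
    | succ i ih => rw [hrec]; exact ((hindep i).memLp_two_fun_mul ih (hM i)).add (memLp_const q)
  have hmeanY : ∀ i, μ[Y (i + 1)] = a * μ[Y i] + q := fun i => by
    have hint : Integrable (fun ω => Y i ω * M i ω) μ :=
      ((hindep i).memLp_two_fun_mul (hY i) (hM i)).integrable one_le_two
    rw [hrec, integral_add hint (integrable_const q),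
      (hindep i).integral_fun_mul_eq_mul_integral (hY i).1 (hM i).1, hmean]
    simp [mul_comm]
  have hvarY : ∀ i, Var[Y (i + 1); μ] = b * Var[Y i; μ] + (b - a ^ 2) * μ[Y i] ^ 2 := fun i => by
    rw [hrec, variance_add_const ((hindep i).memLp_two_fun_mul (hY i) (hM i)).1,
      (hindep i).variance_fun_mul (hY i) (hM i), variance_eq_sub (hM i), hmean]
    simp only [Pi.pow_apply, hsq]
  have hmeanY_lim : Tendsto (fun i => μ[Y i]) atTop (𝓝 (q / (1 - a))) :=
    tendsto_of_affine_recurrence_s11 ha hmeanY tendsto_const_nhds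
  have hb₀ : 0 ≤ b := hsq 0 ▸ integral_nonneg fun ω => sq_nonneg _
  exact tendsto_of_affine_recurrence_s11 (abs_lt.2 ⟨by linarith, hb⟩) hvarY
    ((hmeanY_lim.pow 2).const_mul _)

end ProbabilityTheory

/-- The random multiplier of one Milstein step, `a = 1 - Δ/τ` and `v = Δ` in the scheme. -/
noncomputable def milsteinFactor (a σ v x : ℝ) : ℝ := a + σ * x + σ ^ 2 / 2 * (x ^ 2 - v)

section milsteinFactor

variable {a σ : ℝ}

lemma measurable_milsteinFactor (v : ℝ) : Measurable (milsteinFactor a σ v) := by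
  unfold milsteinFactor; fun_prop

lemma milsteinFactor_eq_sum (v x : ℝ) :
    milsteinFactor a σ v x = ∑ k : Fin 3, ![a - σ ^ 2 / 2 * v, σ, σ ^ 2 / 2] k * x ^ (k : ℕ) := by
  simp [milsteinFactor, Fin.sum_univ_succ]; ring

lemma milsteinFactor_sq_eq_sum (v x : ℝ) :
    milsteinFactor a σ v x ^ 2 = ∑ k : Fin 5, ![(a - σ ^ 2 / 2 * v) ^ 2,
      2 * (a - σ ^ 2 / 2 * v) * σ, σ ^ 2 + (a - σ ^ 2 / 2 * v) * σ ^ 2, σ ^ 3, σ ^ 4 / 4] k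
        * x ^ (k : ℕ) := by
  simp [milsteinFactor, Fin.sum_univ_succ]; ring

variable {v : ℝ≥0}

lemma integral_milsteinFactor_gaussianReal :
    ∫ x, milsteinFactor a σ v x ∂gaussianReal 0 v = a := by
  simp_rw [milsteinFactor_eq_sum, integral_sum_mul_pow (integrable_pow_gaussianReal 0)]
  simp [Fin.sum_univ_succ, integral_sq_gaussianReal_zero]

lemma integral_milsteinFactor_sq_gaussianReal :
    ∫ x, milsteinFactor a σ v x ^ 2 ∂gaussianReal 0 v = a ^ 2 + σ ^ 2 * v + σ ^ 4 * v ^ 2 / 2 := by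
  simp_rw [milsteinFactor_sq_eq_sum, integral_sum_mul_pow (integrable_pow_gaussianReal 0)]
  simp [Fin.sum_univ_succ, integral_sq_gaussianReal_zero, integral_pow_three_gaussianReal_zero,
    integral_pow_four_gaussianReal_zero]
  ring

lemma memLp_milsteinFactor_gaussianReal : MemLp (milsteinFactor a σ v) 2 (gaussianReal 0 v) := by
  refine (memLp_two_iff_integrable_sq (measurable_milsteinFactor _).aestronglyMeasurable).2 ?_
  simp_rw [milsteinFactor_sq_eq_sum]
  exact integrable_finsetSum _ fun k _ => (integrable_pow_gaussianReal 0 _).const_mul _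

end milsteinFactor

lemma milstein_second_moment_lt_one {τ σ Δ : ℝ} (hτ : 0 < τ) (hΔ : 0 < Δ)
    (hstab : Δ < (2 * τ - σ ^ 2 * τ ^ 2) / (σ ^ 4 * τ ^ 2 / 2 + 1)) :
    (1 - Δ / τ) ^ 2 + σ ^ 2 * Δ + σ ^ 4 * Δ ^ 2 / 2 < 1 := by
  rw [lt_div_iff₀ (by positivity)] at hstab
  have hgap : 1 - ((1 - Δ / τ) ^ 2 + σ ^ 2 * Δ + σ ^ 4 * Δ ^ 2 / 2)
      = Δ / τ ^ 2 * (2 * τ - σ ^ 2 * τ ^ 2 - Δ * (σ ^ 4 * τ ^ 2 / 2 + 1)) := by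
    field_simp; ring
  have : 0 < Δ / τ ^ 2 * (2 * τ - σ ^ 2 * τ ^ 2 - Δ * (σ ^ 4 * τ ^ 2 / 2 + 1)) :=
    mul_pos (by positivity) (by linarith)
  linarith
lemma milstein_variance_limit_eq {τ σ Δ μ' : ℝ} (hτ : τ ≠ 0) (hσ : σ ≠ 0) (hΔ : Δ ≠ 0) :
    ((1 - Δ / τ) ^ 2 + σ ^ 2 * Δ + σ ^ 4 * Δ ^ 2 / 2 - (1 - Δ / τ) ^ 2)
        * (μ' * Δ / (1 - (1 - Δ / τ))) ^ 2 / (1 - ((1 - Δ / τ) ^ 2 + σ ^ 2 * Δ + σ ^ 4 * Δ ^ 2 / 2))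
      = (μ' * τ) ^ 2 * (1 + σ ^ 2 * Δ / 2)
        / (2 / (σ ^ 2 * τ) - 1 - Δ / (σ ^ 2 * τ ^ 2) - σ ^ 2 * Δ / 2) := by
  have hnum : ((1 - Δ / τ) ^ 2 + σ ^ 2 * Δ + σ ^ 4 * Δ ^ 2 / 2 - (1 - Δ / τ) ^ 2)
      * (μ' * Δ / (1 - (1 - Δ / τ))) ^ 2 = σ ^ 2 * Δ * ((μ' * τ) ^ 2 * (1 + σ ^ 2 * Δ / 2)) := by
    rw [sub_sub_cancel]; field_simp; ring
  have hden : 1 - ((1 - Δ / τ) ^ 2 + σ ^ 2 * Δ + σ ^ 4 * Δ ^ 2 / 2)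
      = σ ^ 2 * Δ * (2 / (σ ^ 2 * τ) - 1 - Δ / (σ ^ 2 * τ ^ 2) - σ ^ 2 * Δ / 2) := by
    field_simp; ring
  rw [hnum, hden, mul_div_mul_left _ _ (by positivity)]

/-- For the Milstein scheme for the IGBM, if `|1 - Δ/τ| < 1` and
`Δ < (2τ - σ²τ²)/(σ⁴τ²/2 + 1)`, then
`Var(Y i ∣ Y₀) → (μ'τ)²(1 + σ²Δ/2) / (2/(σ²τ) - 1 - Δ/(σ²τ²) - σ²Δ/2)`. -/
theorem milstein_asymptotic_variance
    {Ω : Type*} [MeasurableSpace Ω] (μ : Measure Ω) [IsProbabilityMeasure μ]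
    (ξ : ℕ → Ω → ℝ) (τ σ μ' y0 : ℝ) (Δ : NNReal)
    (hτ : 0 < τ) (hσ : 0 < σ) (hΔ : 0 < (Δ : ℝ))
    (hmeas : ∀ i, Measurable (ξ i))
    (hindep : iIndepFun ξ μ)
    (hgauss : ∀ i, Measure.map (ξ i) μ = gaussianReal 0 Δ)
    (Y : ℕ → Ω → ℝ)
    (hY0 : ∀ ω, Y 0 ω = y0)
    (hYrec : ∀ i ω, Y (i + 1) ω
      = Y i ω * (1 - (Δ : ℝ) / τ + σ * ξ i ω + σ ^ 2 / 2 * (ξ i ω ^ 2 - (Δ : ℝ)))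
        + μ' * (Δ : ℝ))
    (hstab : |1 - (Δ : ℝ) / τ| < 1)
    (hstab2 : (Δ : ℝ) < (2 * τ - σ ^ 2 * τ ^ 2) / (σ ^ 4 * τ ^ 2 / 2 + 1)) :
    Tendsto (fun i : ℕ => variance (Y i) μ) atTop
      (nhds ((μ' * τ) ^ 2 * (1 + σ ^ 2 * (Δ : ℝ) / 2) /
        (2 / (σ ^ 2 * τ) - 1 - (Δ : ℝ) / (σ ^ 2 * τ ^ 2) - σ ^ 2 * (Δ : ℝ) / 2))) := by
  set f := milsteinFactor (1 - Δ / τ) σ Δ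
  have hf : Measurable f := measurable_milsteinFactor _
  have hlaw (i : ℕ) : HasLaw (ξ i) (gaussianReal 0 Δ) μ := ⟨(hmeas i).aemeasurable, hgauss i⟩
  have hpast := measurable_iSup_lt_of_recurrence (F := fun y x => y * f x + μ' * Δ)
    (by unfold f milsteinFactor; fun_prop) y0 hY0 hYrec
  have hlim := tendsto_variance_of_random_affine_recurrence (μ := μ) (M := fun i => f ∘ ξ i)
    (fun i => funext (hYrec i))
    (by rw [show Y 0 = fun _ => y0 from funext hY0]; exact memLp_const y0)
    (fun i => (hindep.indepFun_of_measurable_iSup_lt hmeas (hpast i)).comp measurable_id hf)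
    (fun i => (memLp_map_measure_iff hf.aestronglyMeasurable (hmeas i).aemeasurable).1
      (hgauss i ▸ memLp_milsteinFactor_gaussianReal))
    (fun i => ((hlaw i).integral_comp hf.aestronglyMeasurable).trans
      integral_milsteinFactor_gaussianReal)
    (fun i => ((hlaw i).integral_comp (f := fun x => f x ^ 2)
      (hf.pow_const 2).aestronglyMeasurable).trans integral_milsteinFactor_sq_gaussianReal)
    hstab (milstein_second_moment_lt_one hτ hΔ hstab2)
  rwa [milstein_variance_limit_eq hτ.ne' hσ.ne' hΔ.ne'] at hlim
end

section
/- For the Lie-Trotter splitting scheme $\widetilde{Y}^{L1}(t_i) = e^{-(1/\tau+\sigma^2/2)\Delta + \sigma\xi_{i-1}}(\widetilde{Y}^{L1}(t_{i-1}) + \mu\Delta)$ with i.i.d. $\xi_i\sim\mathcal{N}(0,\Delta)$, the asymptotic mean exists for any $\Delta>0$ and equals $\mu\tau\,\frac{\Delta/\tau}{e^{\Delta/\tau}-1}$. -/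
/-!
By induction `Y i` is measurable with respect to `σ(ξ 0, …, ξ (i-1))`, hence independent of
`ξ i`. Taking expectations in the recursion therefore gives
`m (i+1) = E[exp(-(1/τ + σ²/2)Δ + σ ξ i)] (m i + μ'Δ) = exp(-Δ/τ) (m i + μ'Δ)`,
the Gaussian moment generating function cancelling the Itô correction `σ²Δ/2`.
This affine recursion contracts to its fixed point
`exp(-Δ/τ) μ'Δ / (1 - exp(-Δ/τ)) = μ'τ (Δ/τ) / (exp(Δ/τ) - 1)`.
-/

open MeasureTheory ProbabilityTheory Filter Real

theorem tendsto_of_affine_recurrence_s12 {m : ℕ → ℝ} {a c : ℝ} (ha : |a| < 1)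
    (hm : ∀ i, m (i + 1) = a * (m i + c)) :
    Tendsto m atTop (nhds (a * c / (1 - a))) := by
  set L := a * c / (1 - a)
  have hfixed : a * (L + c) = L := by
    have : 1 - a ≠ 0 := by linarith [le_abs_self a]
    simp only [L]; field_simp; ring
  have hclosed : ∀ i, m i = L + a ^ i * (m 0 - L) := by
    intro i
    induction i with
    | zero => ring
    | succ i ih => rw [hm, ih, pow_succ]; linear_combination hfixed
  rw [funext hclosed]
  simpa using ((tendsto_pow_atTop_nhds_zero_of_abs_lt_one ha).mul_const (m 0 - L)).const_add L

theorem measurable_iSup_comap_Iio_of_recurrence {Ω β γ : Type*} [mβ : MeasurableSpace β]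
    [MeasurableSpace γ] {ξ : ℕ → Ω → β} {Y : ℕ → Ω → γ} (F : ℕ → γ × β → γ)
    (hF : ∀ i, Measurable (F i)) (y₀ : γ) (hY0 : ∀ ω, Y 0 ω = y₀)
    (hY : ∀ i ω, Y (i + 1) ω = F i (Y i ω, ξ i ω)) (i : ℕ) :
    Measurable[⨆ j ∈ Set.Iio i, mβ.comap (ξ j)] (Y i) := by
  induction i with
  | zero => rw [funext hY0]; exact measurable_const
  | succ i ih =>
    have hmono : (⨆ j ∈ Set.Iio i, mβ.comap (ξ j)) ≤ ⨆ j ∈ Set.Iio (i + 1), mβ.comap (ξ j) :=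
      biSup_mono fun j hj => Nat.lt_succ_of_lt hj
    have hξ : Measurable[⨆ j ∈ Set.Iio (i + 1), mβ.comap (ξ j)] (ξ i) :=
      Measurable.of_comap_le (le_iSup₂ (f := fun j (_ : j ∈ Set.Iio (i + 1)) => mβ.comap (ξ j))
        i (Nat.lt_succ_self i))
    rw [funext (hY i)]
    exact (hF i).comp ((ih.mono hmono le_rfl).prodMk hξ)

namespace ProbabilityTheory

theorem iIndepFun.indepFun_of_measurable_iSup_comap {Ω ι β γ : Type*} [MeasurableSpace Ω]
    [mβ : MeasurableSpace β] [MeasurableSpace γ] {μ : Measure Ω} {ξ : ι → Ω → β}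
    (hindep : iIndepFun ξ μ) (hmeas : ∀ i, Measurable (ξ i)) {S : Set ι} {i : ι} (hi : i ∉ S)
    {X : Ω → γ} (hX : Measurable[⨆ j ∈ S, mβ.comap (ξ j)] X) :
    IndepFun X (ξ i) μ := by
  have h := indep_iSup_of_disjoint (fun j => (hmeas j).comap_le) hindep.iIndep
    (Set.disjoint_singleton_right.mpr hi)
  rw [IndepFun_iff_Indep]
  refine indep_of_indep_of_le h hX.comap_le ?_
  exact le_iSup₂ (f := fun j (_ : j ∈ ({i} : Set ι)) => mβ.comap (ξ j)) i rfl

variable {Ω : Type*} [MeasurableSpace Ω] {μ : Measure Ω}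

theorem IndepFun.integrable_mul_add_const [IsFiniteMeasure μ] {A X : Ω → ℝ}
    (hAX : IndepFun A X μ) (hA : Integrable A μ) (hX : Integrable X μ) (c : ℝ) :
    Integrable (fun ω => A ω * (X ω + c)) μ :=
  (hAX.comp measurable_id (measurable_add_const c)).integrable_mul hA (hX.add (integrable_const c))

theorem IndepFun.integral_mul_add_const [IsProbabilityMeasure μ] {A X : Ω → ℝ}
    (hAX : IndepFun A X μ) (hA : Integrable A μ) (hX : Integrable X μ) (c : ℝ) :
    ∫ ω, A ω * (X ω + c) ∂μ = μ[A] * (μ[X] + c) := by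
  have hAXc : IndepFun A (fun ω => X ω + c) μ := hAX.comp measurable_id (measurable_add_const c)
  rw [hAXc.integral_fun_mul_eq_mul_integral hA.1 (hX.add (integrable_const c)).1,
    integral_add hX (integrable_const c), integral_const, probReal_univ, one_smul]

theorem integrable_exp_add_mul_of_map_eq_gaussianReal {X : Ω → ℝ} {v : NNReal}
    (hX : μ.map X = gaussianReal 0 v) (k s : ℝ) :
    Integrable (fun ω => exp (k + s * X ω)) μ := by
  have : NeZero μ := ⟨fun h => IsProbabilityMeasure.ne_zero (gaussianReal 0 v)
    (by rw [← hX, h, Measure.map_zero])⟩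
  have : Integrable (fun ω => exp (s * X ω)) μ := by
    rw [← mgf_pos_iff, mgf_gaussianReal hX]; exact exp_pos _
  simpa only [exp_add] using this.const_mul (exp k)

theorem integral_exp_add_mul_of_map_eq_gaussianReal {X : Ω → ℝ} {v : NNReal}
    (hX : μ.map X = gaussianReal 0 v) (k s : ℝ) :
    ∫ ω, exp (k + s * X ω) ∂μ = exp (k + v * s ^ 2 / 2) := by
  simp only [exp_add, integral_const_mul]
  rw [← mgf, mgf_gaussianReal hX, zero_mul, zero_add]

end ProbabilityTheory

theorem lie_trotter_L1_asymptotic_mean_general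
    {Ω : Type*} [MeasurableSpace Ω] (μ : Measure Ω) [IsProbabilityMeasure μ]
    (ξ : ℕ → Ω → ℝ) (τ σ μ' y0 : ℝ) (Δ : NNReal)
    (hτ : 0 < τ) (hΔ : 0 < (Δ : ℝ))
    (hmeas : ∀ i, Measurable (ξ i))
    (hindep : iIndepFun ξ μ)
    (hgauss : ∀ i, Measure.map (ξ i) μ = gaussianReal 0 Δ)
    (Y : ℕ → Ω → ℝ)
    (hY0 : ∀ ω, Y 0 ω = y0)
    (hYrec : ∀ i ω, Y (i + 1) ω
      = exp (-(1 / τ + σ ^ 2 / 2) * (Δ : ℝ) + σ * ξ i ω) * (Y i ω + μ' * (Δ : ℝ))) :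
    Tendsto (fun i : ℕ => μ[Y i]) atTop
      (nhds (μ' * τ * (((Δ : ℝ) / τ) / (exp ((Δ : ℝ) / τ) - 1)))) := by
  set k := -(1 / τ + σ ^ 2 / 2) * (Δ : ℝ)
  set c := μ' * (Δ : ℝ)
  set A : ℕ → Ω → ℝ := fun i ω => exp (k + σ * ξ i ω)
  have hA : ∀ i, Integrable (A i) μ := fun i =>
    integrable_exp_add_mul_of_map_eq_gaussianReal (hgauss i) k σ
  have hAmean : ∀ i, μ[A i] = exp (-((Δ : ℝ) / τ)) := fun i => by
    rw [integral_exp_add_mul_of_map_eq_gaussianReal (hgauss i)]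
    congr 1; simp only [k]; field_simp; ring
  have hAY : ∀ i, IndepFun (A i) (Y i) μ := fun i =>
    (hindep.indepFun_of_measurable_iSup_comap hmeas (Set.self_notMem_Iio)
      (measurable_iSup_comap_Iio_of_recurrence (fun i p => exp (k + σ * p.2) * (p.1 + c))
        (fun i => by fun_prop) y0 hY0 hYrec i)).symm.comp
      (measurable_const.add (measurable_id.const_mul σ)).exp measurable_id
  have hYint : ∀ i, Integrable (Y i) μ := by
    intro i
    induction i with
    | zero => rw [funext hY0]; exact integrable_const y0
    | succ i ih => rw [funext (hYrec i)]; exact (hAY i).integrable_mul_add_const (hA i) ih c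
  have hmean : ∀ i, μ[Y (i + 1)] = exp (-((Δ : ℝ) / τ)) * (μ[Y i] + c) := fun i => by
    rw [funext (hYrec i), (hAY i).integral_mul_add_const (hA i) (hYint i), hAmean]
  have hrate : |exp (-((Δ : ℝ) / τ))| < 1 := by
    rw [abs_of_pos (exp_pos _), exp_lt_one_iff, neg_lt_zero]; positivity
  convert tendsto_of_affine_recurrence_s12 (m := fun i => μ[Y i]) hrate hmean using 2
  have : exp ((Δ : ℝ) / τ) - 1 ≠ 0 := by
    rw [sub_ne_zero, Ne, exp_eq_one_iff]; positivity
  simp only [c]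
  rw [exp_neg]
  field_simp

/-- For the Lie-Trotter splitting scheme
`Y (i+1) = exp(-(1/τ + σ²/2)Δ + σ ξ_i) * (Y i + μ'Δ)` with i.i.d. `ξ_i ~ N(0, Δ)`,
the asymptotic mean exists for any `Δ > 0` and equals `μ'τ (Δ/τ)/(exp(Δ/τ) - 1)`. -/
theorem lie_trotter_L1_asymptotic_mean
    {Ω : Type*} [MeasurableSpace Ω] (μ : Measure Ω) [IsProbabilityMeasure μ]
    (ξ : ℕ → Ω → ℝ) (τ σ μ' y0 : ℝ) (Δ : NNReal)
    (hτ : 0 < τ) (hσ : 0 < σ) (hΔ : 0 < (Δ : ℝ))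
    (hmeas : ∀ i, Measurable (ξ i))
    (hindep : iIndepFun ξ μ)
    (hgauss : ∀ i, Measure.map (ξ i) μ = gaussianReal 0 Δ)
    (Y : ℕ → Ω → ℝ)
    (hY0 : ∀ ω, Y 0 ω = y0)
    (hYrec : ∀ i ω, Y (i + 1) ω
      = exp (-(1 / τ + σ ^ 2 / 2) * (Δ : ℝ) + σ * ξ i ω) * (Y i ω + μ' * (Δ : ℝ))) :
    Tendsto (fun i : ℕ => μ[Y i]) atTop
      (nhds (μ' * τ * (((Δ : ℝ) / τ) / (exp ((Δ : ℝ) / τ) - 1)))) :=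
  lie_trotter_L1_asymptotic_mean_general μ ξ τ σ μ' y0 Δ hτ hΔ hmeas hindep hgauss Y hY0 hYrec
end

section
/- If $\sigma^2\tau<2$, the asymptotic variance of the second Strang scheme equals $\big(\mu\tau\frac{\Delta/\tau}{e^{\Delta/\tau}-1}\big)^2\cdot\frac{e^{\Delta/\tau}(1-e^{\Delta\sigma^2/2})(e^{2\Delta/\tau}+e^{\Delta\sigma^2/2})}{e^{\Delta\sigma^2}-e^{2\Delta/\tau}}$. -/
/-!
The scheme is a random affine recurrence `Y (i+1) = Y i * A i + B i` whose coefficients are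
exponentials of the `i`-th Gaussian increments, hence i.i.d. and independent of `Y i`. The mean
and the second moment therefore obey deterministic affine recurrences
`m' = E[A] m + E[B]` and `s' = E[A²] s + 2 E[AB] m + E[B²]`, which converge because
`E[A²] = exp (Δσ² - 2Δ/τ) < 1` exactly when `σ²τ < 2`. The Gaussian moment generating function
gives the five coefficients in closed form, and the limit of `s - m²` simplifies to the stated
expression.
-/

open MeasureTheory ProbabilityTheory Filter Real Topology
open scoped NNReal

lemma tendsto_of_affine_recurrence_s15 {q L : ℝ} {u x : ℕ → ℝ} (hq : |q| < 1)
    (hu : Tendsto u atTop (𝓝 L)) (hx : ∀ n, x (n + 1) = q * x n + u n) :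
    Tendsto x atTop (𝓝 (L / (1 - q))) := by
  have hq1 : 1 - q ≠ 0 := by linarith [le_abs_self q]
  set M := L / (1 - q)
  have hM : q * M + L = M := by simp only [M]; field_simp; ring
  rw [Metric.tendsto_atTop]
  intro ε hε
  obtain ⟨N, hN⟩ := Metric.tendsto_atTop.mp hu (ε * (1 - |q|) / 2)
    (by have := sub_pos.mpr hq; positivity)
  -- the error contracts by `|q|` per step, up to the `ε (1 - |q|) / 2` coming from `u`
  have bound : ∀ k, |x (N + k) - M| ≤ |q| ^ k * |x N - M| + ε / 2 := by
    intro k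
    induction k with
    | zero => simp; positivity
    | succ k ih =>
      have hk := hN (N + k) (Nat.le_add_right _ _)
      rw [Real.dist_eq] at hk
      calc |x (N + (k + 1)) - M| = |q * (x (N + k) - M) + (u (N + k) - L)| := by
            rw [← add_assoc, hx]; congr 1; linear_combination hM
        _ ≤ |q| * |x (N + k) - M| + |u (N + k) - L| := by
            rw [← abs_mul]; exact abs_add_le _ _
        _ ≤ |q| * (|q| ^ k * |x N - M| + ε / 2) + ε * (1 - |q|) / 2 := by
            gcongr
        _ = |q| ^ (k + 1) * |x N - M| + ε / 2 := by ring
  have hpow : Tendsto (fun k ↦ |q| ^ k * |x N - M|) atTop (𝓝 0) := by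
    simpa using (tendsto_pow_atTop_nhds_zero_of_lt_one (abs_nonneg q) hq).mul_const |x N - M|
  obtain ⟨K, hK⟩ := Metric.tendsto_atTop.mp hpow (ε / 2) (by positivity)
  refine ⟨N + K, fun n hn ↦ ?_⟩
  obtain ⟨k, rfl⟩ := Nat.exists_eq_add_of_le (le_trans (Nat.le_add_right N K) hn)
  have hk := hK k (by omega)
  rw [Real.dist_eq, sub_zero, abs_of_nonneg (by positivity)] at hk
  rw [Real.dist_eq]
  linarith [bound k]

section RandomAffineRecurrence

variable {Ω : Type*} {mΩ : MeasurableSpace Ω} {μ : Measure Ω} {m₁ m₂ : MeasurableSpace Ω}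
  {Y A B : Ω → ℝ}

lemma indepFun_of_indep (h : Indep m₁ m₂ μ) {V W : Ω → ℝ} (hV : Measurable[m₁] V)
    (hW : Measurable[m₂] W) : IndepFun V W μ :=
  indep_of_indep_of_le_right (indep_of_indep_of_le_left h hV.comap_le) hW.comap_le

lemma memLp_two_mul_add_of_indep (h : Indep m₁ m₂ μ) (hY : Measurable[m₁] Y)
    (hA : Measurable[m₂] A) (hY₂ : MemLp Y 2 μ) (hA₂ : MemLp A 2 μ) (hB₂ : MemLp B 2 μ) :
    MemLp (fun ω ↦ Y ω * A ω + B ω) 2 μ := by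
  have hYA : Integrable (fun ω ↦ (Y ω * A ω) ^ 2) μ := by
    simp_rw [mul_pow]
    exact (indepFun_of_indep h (hY.pow_const 2) (hA.pow_const 2)).integrable_mul
      hY₂.integrable_sq hA₂.integrable_sq
  exact ((memLp_two_iff_integrable_sq
    (hY₂.aestronglyMeasurable.mul hA₂.aestronglyMeasurable)).mpr hYA).add hB₂

lemma integral_mul_add_of_indep (h : Indep m₁ m₂ μ) (hY : Measurable[m₁] Y)
    (hA : Measurable[m₂] A) (hY₁ : Integrable Y μ) (hA₁ : Integrable A μ) (hB₁ : Integrable B μ) :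
    ∫ ω, (Y ω * A ω + B ω) ∂μ = μ[Y] * μ[A] + μ[B] := by
  have hYA := indepFun_of_indep h hY hA
  rw [integral_add (f := fun ω ↦ Y ω * A ω) (hYA.integrable_mul hY₁ hA₁) hB₁,
    ← hYA.integral_mul_eq_mul_integral hY₁.aestronglyMeasurable hA₁.aestronglyMeasurable]
  rfl

lemma integral_sq_mul_add_of_indep [IsFiniteMeasure μ] (h : Indep m₁ m₂ μ)
    (hY : Measurable[m₁] Y) (hA : Measurable[m₂] A) (hB : Measurable[m₂] B)
    (hY₂ : MemLp Y 2 μ) (hA₂ : MemLp A 2 μ) (hB₂ : MemLp B 2 μ) :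
    ∫ ω, (Y ω * A ω + B ω) ^ 2 ∂μ = (∫ ω, Y ω ^ 2 ∂μ) * (∫ ω, A ω ^ 2 ∂μ)
      + 2 * μ[Y] * (∫ ω, A ω * B ω ∂μ) + ∫ ω, B ω ^ 2 ∂μ := by
  have hY₁ : Integrable Y μ := hY₂.integrable one_le_two
  have hAB : Integrable (A * B) μ := hA₂.integrable_mul hB₂
  have hYAB := indepFun_of_indep h hY (hA.mul hB)
  have hYA₂ := indepFun_of_indep h (hY.pow_const 2) (hA.pow_const 2)
  have hI₁ : Integrable (fun ω ↦ Y ω ^ 2 * A ω ^ 2) μ :=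
    hYA₂.integrable_mul hY₂.integrable_sq hA₂.integrable_sq
  have hI₂ : Integrable (fun ω ↦ 2 * (Y ω * (A ω * B ω))) μ :=
    (hYAB.integrable_mul hY₁ hAB).const_mul 2
  calc ∫ ω, (Y ω * A ω + B ω) ^ 2 ∂μ
      = ∫ ω, (Y ω ^ 2 * A ω ^ 2 + 2 * (Y ω * (A ω * B ω)) + B ω ^ 2) ∂μ := by
        congr 1; ext ω; ring
    _ = (∫ ω, Y ω ^ 2 * A ω ^ 2 ∂μ) + 2 * (∫ ω, Y ω * (A ω * B ω) ∂μ)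
          + ∫ ω, B ω ^ 2 ∂μ := by
        rw [integral_add (f := fun ω ↦ Y ω ^ 2 * A ω ^ 2 + 2 * (Y ω * (A ω * B ω)))
          (hI₁.add hI₂) hB₂.integrable_sq, integral_add hI₁ hI₂, integral_const_mul]
    _ = _ := by
        have hYA₂' : ∫ ω, Y ω ^ 2 * A ω ^ 2 ∂μ = (∫ ω, Y ω ^ 2 ∂μ) * ∫ ω, A ω ^ 2 ∂μ :=
          hYA₂.integral_mul_eq_mul_integral hY₂.integrable_sq.aestronglyMeasurable
            hA₂.integrable_sq.aestronglyMeasurable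
        have hYAB' : ∫ ω, Y ω * (A ω * B ω) ∂μ = μ[Y] * ∫ ω, A ω * B ω ∂μ :=
          hYAB.integral_mul_eq_mul_integral hY₁.aestronglyMeasurable hAB.aestronglyMeasurable
        rw [hYA₂', hYAB']
        ring

lemma measurable_of_affine_recurrence {G : ℕ → MeasurableSpace Ω} (hG : Monotone G)
    {Y A B : ℕ → Ω → ℝ} (hY₀ : Measurable[G 0] (Y 0)) (hA : ∀ i, Measurable[G (i + 1)] (A i))
    (hB : ∀ i, Measurable[G (i + 1)] (B i)) (hrec : ∀ i ω, Y (i + 1) ω = Y i ω * A i ω + B i ω) :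
    ∀ i, Measurable[G i] (Y i)
  | 0 => hY₀
  | i + 1 => by
    rw [funext (hrec i)]
    exact (((measurable_of_affine_recurrence hG hY₀ hA hB hrec i).mono (hG i.le_succ) le_rfl).mul
      (hA i)).add (hB i)

theorem tendsto_variance_of_affine_recurrence [IsProbabilityMeasure μ]
    {G H : ℕ → MeasurableSpace Ω} (hGH : ∀ i, Indep (G i) (H i) μ) {Y A B : ℕ → Ω → ℝ}
    (hYG : ∀ i, Measurable[G i] (Y i)) (hAH : ∀ i, Measurable[H i] (A i))
    (hBH : ∀ i, Measurable[H i] (B i)) (hY₀ : MemLp (Y 0) 2 μ) (hA : ∀ i, MemLp (A i) 2 μ)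
    (hB : ∀ i, MemLp (B i) 2 μ) (hrec : ∀ i ω, Y (i + 1) ω = Y i ω * A i ω + B i ω)
    {a a₂ b b₂ c : ℝ} (ha : ∀ i, μ[A i] = a) (ha₂ : ∀ i, ∫ ω, A i ω ^ 2 ∂μ = a₂)
    (hb : ∀ i, μ[B i] = b) (hb₂ : ∀ i, ∫ ω, B i ω ^ 2 ∂μ = b₂)
    (hc : ∀ i, ∫ ω, A i ω * B i ω ∂μ = c) (ha₂_lt : a₂ < 1) :
    Tendsto (fun i ↦ variance (Y i) μ) atTop
      (𝓝 ((2 * c * (b / (1 - a)) + b₂) / (1 - a₂) - (b / (1 - a)) ^ 2)) := by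
  have hY : ∀ i, MemLp (Y i) 2 μ := by
    intro i
    induction i with
    | zero => exact hY₀
    | succ i ih =>
      rw [funext (hrec i)]
      exact memLp_two_mul_add_of_indep (hGH i) (hYG i) (hAH i) ih (hA i) (hB i)
  have hmean : ∀ i, μ[Y (i + 1)] = a * μ[Y i] + b := fun i ↦ by
    rw [funext (hrec i), integral_mul_add_of_indep (hGH i) (hYG i) (hAH i)
      ((hY i).integrable one_le_two) ((hA i).integrable one_le_two)
      ((hB i).integrable one_le_two), ha, hb, mul_comm]
  have hsecond : ∀ i, ∫ ω, Y (i + 1) ω ^ 2 ∂μ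
      = a₂ * ∫ ω, Y i ω ^ 2 ∂μ + (2 * c * μ[Y i] + b₂) := fun i ↦ by
    simp_rw [hrec i]
    rw [integral_sq_mul_add_of_indep (hGH i) (hYG i) (hAH i) (hBH i) (hY i) (hA i) (hB i),
      ha₂, hb₂, hc]
    ring
  -- Jensen: `a² ≤ a₂`, so `|a| < 1` and `0 ≤ a₂ < 1`
  have hvarA : 0 ≤ a₂ - a ^ 2 := by
    have := variance_nonneg (A 0) μ
    rw [variance_eq_sub (hA 0), ha] at this
    simpa only [Pi.pow_apply, ha₂] using this
  have ha_lt : |a| < 1 := (sq_lt_one_iff_abs_lt_one a).mp (by linarith)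
  have ha₂_abs : |a₂| < 1 := abs_lt.mpr ⟨by nlinarith, ha₂_lt⟩
  have hm := tendsto_of_affine_recurrence_s15 (x := fun i ↦ μ[Y i]) ha_lt tendsto_const_nhds hmean
  have hs := tendsto_of_affine_recurrence_s15 (x := fun i ↦ ∫ ω, Y i ω ^ 2 ∂μ) ha₂_abs
    ((hm.const_mul (2 * c)).add_const b₂) hsecond
  refine (hs.sub (hm.pow 2)).congr fun i ↦ ?_
  rw [variance_eq_sub (hY i)]
  rfl

end RandomAffineRecurrence

section GaussianExponential

variable {Ω : Type*} {mΩ : MeasurableSpace Ω} {μ : Measure Ω}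

noncomputable def expAffine (X Y : Ω → ℝ) (c s t : ℝ) (ω : Ω) : ℝ := exp (c + s * X ω + t * Y ω)

lemma expAffine_mul (X Y : Ω → ℝ) (c s t c' s' t' : ℝ) (ω : Ω) :
    expAffine X Y c s t ω * expAffine X Y c' s' t' ω
      = expAffine X Y (c + c') (s + s') (t + t') ω := by
  rw [expAffine, expAffine, expAffine, ← exp_add]; ring_nf

lemma measurable_expAffine {m : MeasurableSpace Ω} {X Y : Ω → ℝ} (hX : Measurable[m] X)
    (hY : Measurable[m] Y) (c s t : ℝ) : Measurable[m] (expAffine X Y c s t) :=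
  ((measurable_const.add (hX.const_mul s)).add (hY.const_mul t)).exp

variable {X Y : Ω → ℝ} {v w : ℝ≥0}

lemma mgf_mul_add_mul_of_indepFun (hX : μ.map X = gaussianReal 0 v)
    (hY : μ.map Y = gaussianReal 0 w) (hXY : IndepFun X Y μ) (s t : ℝ) :
    mgf (fun ω ↦ s * X ω + t * Y ω) μ 1 = exp ((v * s ^ 2 + w * t ^ 2) / 2) := by
  have hXm : AEMeasurable X μ := aemeasurable_of_map_neZero (by rw [hX]; infer_instance)
  have hYm : AEMeasurable Y μ := aemeasurable_of_map_neZero (by rw [hY]; infer_instance)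
  calc mgf (fun ω ↦ s * X ω + t * Y ω) μ 1 = ∫ ω, exp (s * X ω) * exp (t * Y ω) ∂μ := by
        simp only [mgf, one_mul, exp_add]
    _ = mgf X μ s * mgf Y μ t := (hXY.exp_mul s t).integral_mul_eq_mul_integral
        (hXm.const_mul s).exp.aestronglyMeasurable (hYm.const_mul t).exp.aestronglyMeasurable
    _ = exp ((v * s ^ 2 + w * t ^ 2) / 2) := by
        rw [mgf_gaussianReal hX, mgf_gaussianReal hY, ← exp_add]; ring_nf

lemma integral_expAffine (hX : μ.map X = gaussianReal 0 v) (hY : μ.map Y = gaussianReal 0 w)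
    (hXY : IndepFun X Y μ) (c s t : ℝ) :
    μ[expAffine X Y c s t] = exp (c + (v * s ^ 2 + w * t ^ 2) / 2) := by
  rw [exp_add, ← mgf_mul_add_mul_of_indepFun hX hY hXY, mgf, ← integral_const_mul]
  congr 1; ext ω
  rw [expAffine, ← exp_add]; ring_nf

lemma integrable_expAffine (hX : μ.map X = gaussianReal 0 v) (hY : μ.map Y = gaussianReal 0 w)
    (hXY : IndepFun X Y μ) (c s t : ℝ) : Integrable (expAffine X Y c s t) μ := by
  have : NeZero μ :=
    ⟨fun h ↦ IsProbabilityMeasure.ne_zero (gaussianReal 0 v) (by simpa [h] using hX.symm)⟩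
  have hmgf := mgf_pos_iff.mp
    ((mgf_mul_add_mul_of_indepFun hX hY hXY s t).symm ▸ exp_pos _)
  refine (hmgf.const_mul (exp c)).congr (ae_of_all _ fun ω ↦ ?_)
  dsimp only
  rw [expAffine, ← exp_add]; ring_nf

lemma memLp_two_expAffine (hX : μ.map X = gaussianReal 0 v) (hY : μ.map Y = gaussianReal 0 w)
    (hXY : IndepFun X Y μ) (c s t : ℝ) : MemLp (expAffine X Y c s t) 2 μ := by
  refine (memLp_two_iff_integrable_sq
    (integrable_expAffine hX hY hXY c s t).aestronglyMeasurable).mpr ?_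
  simp_rw [sq, expAffine_mul]
  exact integrable_expAffine hX hY hXY _ _ _

end GaussianExponential

section Rows

variable {Ω ι β : Type*} {mΩ : MeasurableSpace Ω} [mβ : MeasurableSpace β]
  (X : ℕ × ι → Ω → β)

abbrev rowsBefore (n : ℕ) : MeasurableSpace Ω := ⨆ p ∈ {p : ℕ × ι | p.1 < n}, mβ.comap (X p)

abbrev rowsAt (n : ℕ) : MeasurableSpace Ω := ⨆ p ∈ {p : ℕ × ι | p.1 = n}, mβ.comap (X p)

lemma rowsBefore_mono : Monotone (rowsBefore X) :=
  fun _ _ hmn ↦ biSup_mono fun _ hp ↦ lt_of_lt_of_le hp hmn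

lemma measurable_rowsBefore {j n : ℕ} (hjn : j < n) (k : ι) :
    Measurable[rowsBefore X n] (X (j, k)) :=
  (comap_measurable (X (j, k))).mono
    (le_biSup (fun p ↦ mβ.comap (X p)) (show (j, k).1 < n from hjn)) le_rfl

lemma measurable_rowsAt (n : ℕ) (k : ι) : Measurable[rowsAt X n] (X (n, k)) :=
  (comap_measurable (X (n, k))).mono
    (le_biSup (fun p ↦ mβ.comap (X p)) (show (n, k).1 = n from rfl)) le_rfl

lemma indep_rowsBefore_rowsAt {μ : Measure Ω} (hX : ∀ p, Measurable (X p)) (h : iIndepFun X μ)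
    (n : ℕ) : Indep (rowsBefore X n) (rowsAt X n) μ :=
  indep_iSup_of_disjoint (fun p ↦ (hX p).comap_le) ((iIndepFun_iff_iIndep _ _ _).mp h)
    (Set.disjoint_left.mpr fun _ hlt heq ↦ (ne_of_lt hlt) heq)

end Rows

lemma strang_exponent_lt {τ σ Δ : ℝ} (hτ : 0 < τ) (hΔ : 0 < Δ) (hstat : σ ^ 2 * τ < 2) :
    Δ * σ ^ 2 / 4 < Δ / (2 * τ) := by
  rw [div_lt_div_iff₀ (by norm_num) (by positivity)]
  nlinarith

lemma strang_S2_limit_eq (μ' τ σ Δ : ℝ) (hτ : 0 < τ) (hΔ : 0 < Δ) (hstat : σ ^ 2 * τ < 2) :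
    (2 * (μ' * Δ * exp (2 * (Δ * σ ^ 2 / 4) - 3 * (Δ / (2 * τ))))
          * (μ' * Δ * exp (-(Δ / (2 * τ))) / (1 - exp (-(2 * (Δ / (2 * τ))))))
        + (μ' * Δ) ^ 2 * exp (2 * (Δ * σ ^ 2 / 4) - 2 * (Δ / (2 * τ))))
        / (1 - exp (4 * (Δ * σ ^ 2 / 4) - 4 * (Δ / (2 * τ))))
      - (μ' * Δ * exp (-(Δ / (2 * τ))) / (1 - exp (-(2 * (Δ / (2 * τ)))))) ^ 2
      = (μ' * τ * ((Δ / τ) / (exp (Δ / τ) - 1))) ^ 2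
        * (exp (Δ / τ) * (1 - exp (Δ * σ ^ 2 / 2)) * (exp (2 * Δ / τ) + exp (Δ * σ ^ 2 / 2))
          / (exp (Δ * σ ^ 2) - exp (2 * Δ / τ))) := by
  set p := Δ / (2 * τ)
  set q := Δ * σ ^ 2 / 4
  have hqp : q < p := strang_exponent_lt hτ hΔ hstat
  have hpow : ∀ (n : ℕ) z, exp (n * z) = exp z ^ n := fun n z ↦ exp_nat_mul z n
  have hp₁ : 1 < exp p := one_lt_exp_iff.mpr (by positivity)
  have hqp₄ : exp q ^ 4 < exp p ^ 4 :=
    pow_lt_pow_left₀ (exp_lt_exp.mpr hqp) (exp_pos q).le (by norm_num)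
  have hp₂ : exp p ^ 2 - 1 ≠ 0 := by nlinarith
  have hpq : exp q ^ 4 - exp p ^ 4 ≠ 0 := sub_ne_zero.mpr hqp₄.ne
  have hpq' : exp p ^ 4 - exp q ^ 4 ≠ 0 := sub_ne_zero.mpr hqp₄.ne'
  rw [show Δ / τ = 2 * p by ring, show 2 * Δ / τ = 4 * p by ring,
    show Δ * σ ^ 2 / 2 = 2 * q by ring, show Δ * σ ^ 2 = 4 * q by ring,
    show μ' * τ * (2 * p / (exp (2 * p) - 1)) = μ' * Δ / (exp (2 * p) - 1) by
      simp only [p]; field_simp]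
  simp only [exp_sub, exp_neg, show ∀ z, exp (2 * z) = exp z ^ 2 from hpow 2,
    show ∀ z, exp (3 * z) = exp z ^ 3 from hpow 3, show ∀ z, exp (4 * z) = exp z ^ 4 from hpow 4]
  field_simp
  ring

theorem strang_S2_asymptotic_variance_general
    {Ω : Type*} [MeasurableSpace Ω] (μ : Measure Ω) [IsProbabilityMeasure μ]
    (φ ψ : ℕ → Ω → ℝ) (τ σ μ' y0 : ℝ) (Δ : NNReal)
    (hτ : 0 < τ) (hΔ : 0 < (Δ : ℝ))
    (hmeasφ : ∀ i, Measurable (φ i)) (hmeasψ : ∀ i, Measurable (ψ i))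
    (hindep : iIndepFun
      (fun p : ℕ × Bool => if p.2 then φ p.1 else ψ p.1) μ)
    (hgaussφ : ∀ i, Measure.map (φ i) μ = gaussianReal 0 (Δ / 2))
    (hgaussψ : ∀ i, Measure.map (ψ i) μ = gaussianReal 0 (Δ / 2))
    (Y : ℕ → Ω → ℝ)
    (hY0 : ∀ ω, Y 0 ω = y0)
    (hYrec : ∀ i ω, Y (i + 1) ω
      = Y i ω * exp (-(1 / τ + σ ^ 2 / 2) * (Δ : ℝ) + σ * (φ i ω + ψ i ω))
        + μ' * (Δ : ℝ) * exp (-(1 / τ + σ ^ 2 / 2) * ((Δ : ℝ) / 2) + σ * ψ i ω))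
    (hstat : σ ^ 2 * τ < 2) :
    Tendsto (fun i : ℕ => variance (Y i) μ) atTop
      (nhds ((μ' * τ * (((Δ : ℝ) / τ) / (exp ((Δ : ℝ) / τ) - 1))) ^ 2
        * (exp ((Δ : ℝ) / τ) * (1 - exp ((Δ : ℝ) * σ ^ 2 / 2))
            * (exp (2 * (Δ : ℝ) / τ) + exp ((Δ : ℝ) * σ ^ 2 / 2)) /
          (exp ((Δ : ℝ) * σ ^ 2) - exp (2 * (Δ : ℝ) / τ))))) := by
  set X : ℕ × Bool → Ω → ℝ := fun p ↦ if p.2 then φ p.1 else ψ p.1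
  have hX : ∀ p, Measurable (X p) := fun ⟨i, b⟩ ↦ by cases b <;> simp [X, hmeasφ, hmeasψ]
  have hφψ : ∀ i, IndepFun (φ i) (ψ i) μ :=
    fun i ↦ hindep.indepFun (show (i, true) ≠ (i, false) by simp)
  set A : ℕ → Ω → ℝ := fun i ↦ expAffine (φ i) (ψ i) (-(1 / τ + σ ^ 2 / 2) * Δ) σ σ
  set B : ℕ → Ω → ℝ := fun i ω ↦ μ' * Δ * expAffine (φ i) (ψ i)
    (-(1 / τ + σ ^ 2 / 2) * (Δ / 2)) 0 σ ω
  have hrec : ∀ i ω, Y (i + 1) ω = Y i ω * A i ω + B i ω := fun i ω ↦ by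
    rw [hYrec]; simp only [A, B, expAffine]; ring_nf
  have hYmeas : ∀ i, Measurable[rowsBefore X i] (Y i) := by
    have hpast := fun i b ↦ measurable_rowsBefore X (Nat.lt_succ_self i) b
    exact measurable_of_affine_recurrence (A := A) (B := B) (rowsBefore_mono X)
      (by simp [funext hY0])
      (fun i ↦ measurable_expAffine (hpast i true) (hpast i false) _ _ _)
      (fun i ↦ (measurable_expAffine (hpast i true) (hpast i false) _ _ _).const_mul _) hrec
  have hnow := measurable_rowsAt X
  have hmom := fun i ↦ integral_expAffine (hgaussφ i) (hgaussψ i) (hφψ i)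
  have hmemLp := fun i ↦ memLp_two_expAffine (hgaussφ i) (hgaussψ i) (hφψ i)
  rw [← strang_S2_limit_eq μ' τ σ Δ hτ hΔ hstat]
  refine tendsto_variance_of_affine_recurrence (A := A) (B := B)
    (indep_rowsBefore_rowsAt X hX hindep) hYmeas
    (fun i ↦ measurable_expAffine (hnow i true) (hnow i false) _ _ _)
    (fun i ↦ (measurable_expAffine (hnow i true) (hnow i false) _ _ _).const_mul _)
    (by simp [funext hY0, memLp_const]) (fun i ↦ hmemLp i _ _ _)
    (fun i ↦ (hmemLp i _ _ _).const_mul _) hrec ?_ ?_ ?_ ?_ ?_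
    (exp_lt_one_iff.mpr (by linarith [strang_exponent_lt hτ hΔ hstat]))
  all_goals
    intro i
    simp only [A, B, mul_pow, sq (expAffine _ _ _ _ _ _), mul_left_comm (expAffine _ _ _ _ _ _),
      expAffine_mul, integral_const_mul, hmom]
    push_cast
    ring_nf

/-- If `σ²τ < 2`, the asymptotic variance of the second Strang scheme
equals `(μ'τ (Δ/τ)/(e^{Δ/τ}-1))² ⬝ e^{Δ/τ}(1 - e^{Δσ²/2})(e^{2Δ/τ} + e^{Δσ²/2}) /
(e^{Δσ²} - e^{2Δ/τ})`. -/
theorem strang_S2_asymptotic_variance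
    {Ω : Type*} [MeasurableSpace Ω] (μ : Measure Ω) [IsProbabilityMeasure μ]
    (φ ψ : ℕ → Ω → ℝ) (τ σ μ' y0 : ℝ) (Δ : NNReal)
    (hτ : 0 < τ) (hσ : 0 < σ) (hΔ : 0 < (Δ : ℝ))
    (hmeasφ : ∀ i, Measurable (φ i)) (hmeasψ : ∀ i, Measurable (ψ i))
    (hindep : iIndepFun
      (fun p : ℕ × Bool => if p.2 then φ p.1 else ψ p.1) μ)
    (hgaussφ : ∀ i, Measure.map (φ i) μ = gaussianReal 0 (Δ / 2))
    (hgaussψ : ∀ i, Measure.map (ψ i) μ = gaussianReal 0 (Δ / 2))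
    (Y : ℕ → Ω → ℝ)
    (hY0 : ∀ ω, Y 0 ω = y0)
    (hYrec : ∀ i ω, Y (i + 1) ω
      = Y i ω * exp (-(1 / τ + σ ^ 2 / 2) * (Δ : ℝ) + σ * (φ i ω + ψ i ω))
        + μ' * (Δ : ℝ) * exp (-(1 / τ + σ ^ 2 / 2) * ((Δ : ℝ) / 2) + σ * ψ i ω))
    (hstat : σ ^ 2 * τ < 2) :
    Tendsto (fun i : ℕ => variance (Y i) μ) atTop
      (nhds ((μ' * τ * (((Δ : ℝ) / τ) / (exp ((Δ : ℝ) / τ) - 1))) ^ 2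
        * (exp ((Δ : ℝ) / τ) * (1 - exp ((Δ : ℝ) * σ ^ 2 / 2))
            * (exp (2 * (Δ : ℝ) / τ) + exp ((Δ : ℝ) * σ ^ 2 / 2)) /
          (exp ((Δ : ℝ) * σ ^ 2) - exp (2 * (Δ : ℝ) / τ))))) :=
  strang_S2_asymptotic_variance_general μ φ ψ τ σ μ' y0 Δ hτ hΔ hmeasφ hmeasψ hindep hgaussφ hgaussψ
    Y hY0 hYrec hstat
end

section
/- Each of the four splitting schemes satisfies the discrete exit property: if $\mu<0$ and $\widetilde{Y}(t_{i-1})\le 0$, then $\widetilde{Y}(t_i)<0$ almost surely, for any time step $\Delta>0$. -/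
open MeasureTheory Real

lemma mul_add_neg_of_nonpos_of_pos_of_neg {α : Type*} [Semiring α] [PartialOrder α]
    [IsStrictOrderedRing α] {y c d : α} (hy : y ≤ 0) (hc : 0 < c) (hd : d < 0) : y * c + d < 0 :=
  add_neg_of_nonpos_of_neg (mul_nonpos_of_nonpos_of_nonneg hy hc.le) hd

theorem splitting_discrete_exit_general
    {Ω : Type*} [MeasurableSpace Ω] (μ : Measure Ω)
    (ξ φ ψ : Ω → ℝ) (τ σ Δ μ' y : ℝ)
    (hΔ : 0 < Δ)
    (hμ' : μ' < 0) (hy : y ≤ 0) :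
    (∀ᵐ ω ∂μ, exp (-(1 / τ + σ ^ 2 / 2) * Δ + σ * ξ ω) * (y + μ' * Δ) < 0) ∧
    (∀ᵐ ω ∂μ, y * exp (-(1 / τ + σ ^ 2 / 2) * Δ + σ * ξ ω) + μ' * Δ < 0) ∧
    (∀ᵐ ω ∂μ, (y + μ' * Δ / 2) * exp (-(1 / τ + σ ^ 2 / 2) * Δ + σ * ξ ω)
        + μ' * Δ / 2 < 0) ∧
    (∀ᵐ ω ∂μ, y * exp (-(1 / τ + σ ^ 2 / 2) * Δ + σ * (φ ω + ψ ω))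
        + μ' * Δ * exp (-(1 / τ + σ ^ 2 / 2) * (Δ / 2) + σ * ψ ω) < 0) := by
  have hdrift : μ' * Δ < 0 := mul_neg_of_neg_of_pos hμ' hΔ
  have hhalf : μ' * Δ / 2 < 0 := div_neg_of_neg_of_pos hdrift two_pos
  -- The random factors are exponentials, so every inequality holds for each `ω`.
  refine ⟨ae_of_all μ fun ω => ?_, ae_of_all μ fun ω => ?_, ae_of_all μ fun ω => ?_,
    ae_of_all μ fun ω => ?_⟩
  · exact mul_neg_of_pos_of_neg (exp_pos _) (add_neg_of_nonpos_of_neg hy hdrift)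
  · exact mul_add_neg_of_nonpos_of_pos_of_neg hy (exp_pos _) hdrift
  · exact mul_add_neg_of_nonpos_of_pos_of_neg (add_nonpos hy hhalf.le) (exp_pos _) hhalf
  · exact mul_add_neg_of_nonpos_of_pos_of_neg hy (exp_pos _)
      (mul_neg_of_neg_of_pos hdrift (exp_pos _))

/-- Each of the four splitting schemes satisfies the discrete exit
property: if `μ' < 0` and the previous value `y` is nonpositive, the updated value is
almost surely negative, for any step `Δ > 0`. -/
theorem splitting_discrete_exit
    {Ω : Type*} [MeasurableSpace Ω] (μ : Measure Ω) [IsProbabilityMeasure μ]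
    (ξ φ ψ : Ω → ℝ) (τ σ Δ μ' y : ℝ)
    (hτ : 0 < τ) (hσ : 0 < σ) (hΔ : 0 < Δ)
    (hμ' : μ' < 0) (hy : y ≤ 0) :
    (∀ᵐ ω ∂μ, exp (-(1 / τ + σ ^ 2 / 2) * Δ + σ * ξ ω) * (y + μ' * Δ) < 0) ∧
    (∀ᵐ ω ∂μ, y * exp (-(1 / τ + σ ^ 2 / 2) * Δ + σ * ξ ω) + μ' * Δ < 0) ∧
    (∀ᵐ ω ∂μ, (y + μ' * Δ / 2) * exp (-(1 / τ + σ ^ 2 / 2) * Δ + σ * ξ ω)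
        + μ' * Δ / 2 < 0) ∧
    (∀ᵐ ω ∂μ, y * exp (-(1 / τ + σ ^ 2 / 2) * Δ + σ * (φ ω + ψ ω))
        + μ' * Δ * exp (-(1 / τ + σ ^ 2 / 2) * (Δ / 2) + σ * ψ ω) < 0) :=
  splitting_discrete_exit_general μ ξ φ ψ τ σ Δ μ' y hΔ hμ' hy
end

section
/- The Milstein update for the IGBM preserves positivity conditionally: if $y>0$ and $y(\sigma^2+2/\tau)-2\mu>0$ and $\Delta < \frac{y}{\sigma^2 y + \frac{2}{\tau}y - 2\mu}$, then for all real $\xi$, the Milstein update $y + \Delta(-y/\tau+\mu) + \sigma y(\xi + \frac{\sigma}{2}(\xi^2-\Delta)) > 0$. -/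
/-!
With `x = σ ξ` the update is `y (x + 1)² / 2 + (y - Δ D) / 2`, where
`D = σ² y + (2/τ) y - 2μ'`. The square is nonnegative since `y > 0`, and since `D > 0` the
stepsize condition `Δ < y / D` says exactly that `Δ D < y`.
-/

lemma milstein_update_eq (τ σ Δ μ' y ξ : ℝ) :
    y + Δ * (-y / τ + μ') + σ * y * (ξ + σ / 2 * (ξ ^ 2 - Δ)) =
      y / 2 * (σ * ξ + 1) ^ 2 + (y - Δ * (σ ^ 2 * y + (2 / τ) * y - 2 * μ')) / 2 := by
  ring

theorem milstein_positivity_general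
    (τ σ Δ μ' y : ℝ)
    (hy : 0 < y)
    (hcond : 0 < y * (σ ^ 2 + 2 / τ) - 2 * μ')
    (hstep : Δ < y / (σ ^ 2 * y + (2 / τ) * y - 2 * μ')) :
    ∀ ξ : ℝ, 0 < y + Δ * (-y / τ + μ') + σ * y * (ξ + σ / 2 * (ξ ^ 2 - Δ)) := by
  intro ξ
  have hD : 0 < σ ^ 2 * y + (2 / τ) * y - 2 * μ' := by linarith
  have hstep' : Δ * (σ ^ 2 * y + (2 / τ) * y - 2 * μ') < y := (lt_div_iff₀ hD).mp hstep
  rw [milstein_update_eq]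
  have hsq : 0 ≤ y / 2 * (σ * ξ + 1) ^ 2 := by positivity
  linarith

/-- The Milstein update for the IGBM preserves positivity conditionally:
if `y > 0`, `y(σ² + 2/τ) - 2μ' > 0` and `Δ < y / (σ²y + (2/τ)y - 2μ')`, then for every
real `ξ` the Milstein update `y + Δ(-y/τ + μ') + σy(ξ + (σ/2)(ξ² - Δ))` is positive. -/
theorem milstein_positivity
    (τ σ Δ μ' y : ℝ)
    (hτ : 0 < τ) (hσ : 0 < σ) (hΔ : 0 < Δ) (hy : 0 < y)
    (hcond : 0 < y * (σ ^ 2 + 2 / τ) - 2 * μ')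
    (hstep : Δ < y / (σ ^ 2 * y + (2 / τ) * y - 2 * μ')) :
    ∀ ξ : ℝ, 0 < y + Δ * (-y / τ + μ') + σ * y * (ξ + σ / 2 * (ξ ^ 2 - Δ)) :=
  milstein_positivity_general τ σ Δ μ' y hy hcond hstep
end
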